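/- arXiv:1807.02650 — 7 statements merged into one kernel-verified Lean document; each statement's English description precedes it below -/
import Mathlib

section
/- Let C be a category equipped with a class of cofibrations and a class of fibrations. If j : U → V and i : V → W are cofibrations such that both i and the composite i ∘ j are acyclic cofibrations, then j is an acyclic cofibration. -/
open CategoryTheory CategoryTheory.Limits

universe w v u

namespace WMC

variable {C : Type u} [Category.{v} C]

/-- An object is cofibrant when the map from the initial object is a cofibration. -/
def Cofibrant [HasInitial C] (Cof : MorphismProperty C) (X : C) : Prop :=
  Cof (initial.to X)

/-- An object is fibrant when the map to the terminal object is a fibration. -/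
def Fibrant [HasTerminal C] (Fib : MorphismProperty C) (X : C) : Prop :=
  Fib (terminal.from X)

/-- The axioms for a class of cofibrations. -/
structure IsCofClass [HasInitial C] (Cof : MorphismProperty C) : Prop where
  initial_cofibrant : Cofibrant Cof (⊥_ C)
  iso_mem : ∀ {X Y : C} (f : X ⟶ Y), IsIso f → Cofibrant Cof X → Cof f
  comp_mem : ∀ {X Y Z : C} (f : X ⟶ Y) (g : Y ⟶ Z), Cof f → Cof g → Cof (f ≫ g)
  pushout_mem : ∀ {A B X : C} (i : A ⟶ B) (f : A ⟶ X), Cof i → Cofibrant Cof A →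
    Cofibrant Cof X →
    ∃ (P : C) (inl : X ⟶ P) (inr : B ⟶ P), IsPushout f i inl inr ∧ Cof inl

/-- The axioms for a class of fibrations (a class of cofibrations on `Cᵒᵖ`). -/
structure IsFibClass [HasTerminal C] (Fib : MorphismProperty C) : Prop where
  terminal_fibrant : Fibrant Fib (⊤_ C)
  iso_mem : ∀ {X Y : C} (f : X ⟶ Y), IsIso f → Fibrant Fib Y → Fib f
  comp_mem : ∀ {X Y Z : C} (f : X ⟶ Y) (g : Y ⟶ Z), Fib f → Fib g → Fib (f ≫ g)
  pullback_mem : ∀ {A B X : C} (p : B ⟶ A) (f : X ⟶ A), Fib p → Fibrant Fib A →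
    Fibrant Fib X →
    ∃ (P : C) (fst : P ⟶ X) (snd : P ⟶ B), IsPullback fst snd f p ∧ Fib fst

variable [HasInitial C] [HasTerminal C]

/-- Acyclic fibration: a fibration with the right lifting property against all
cofibrations between cofibrant objects. -/
def IsAcyclicFib (Cof Fib : MorphismProperty C) {X Y : C} (p : X ⟶ Y) : Prop :=
  Fib p ∧ ∀ {A B : C} (i : A ⟶ B), Cof i → Cofibrant Cof A → Cofibrant Cof B →
    HasLiftingProperty i p

/-- Acyclic cofibration: a cofibration with the left lifting property against all
fibrations between fibrant objects. -/
def IsAcyclicCof (Cof Fib : MorphismProperty C) {A B : C} (i : A ⟶ B) : Prop :=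
  Cof i ∧ ∀ {X Y : C} (p : X ⟶ Y), Fib p → Fibrant Fib X → Fibrant Fib Y →
    HasLiftingProperty i p

end WMC

namespace CategoryTheory.HasLiftingProperty

variable {C : Type*} [Category C] [HasTerminal C]

/-- Extending `v` along `i` (possible as `i` lifts against `Y ⟶ ⊤_ C`) gives a square for
`j ≫ i` against `p`; its lift, precomposed with `i`, lifts `j`. -/
theorem of_comp_left_of_terminal {U V W X Y : C} (j : U ⟶ V) (i : V ⟶ W) (p : X ⟶ Y)
    [HasLiftingProperty i (terminal.from Y)] [HasLiftingProperty (j ≫ i) p] :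
    HasLiftingProperty j p where
  sq_hasLift {u v} sq := by
    have extend : CommSq v i (terminal.from Y) (terminal.from W) := ⟨Subsingleton.elim _ _⟩
    have lift : CommSq u (j ≫ i) p extend.lift :=
      ⟨by rw [Category.assoc, extend.fac_left, sq.w]⟩
    exact ⟨⟨⟨i ≫ lift.lift, by rw [← Category.assoc, lift.fac_left],
      by rw [Category.assoc, lift.fac_right, extend.fac_left]⟩⟩⟩

end CategoryTheory.HasLiftingProperty

namespace WMC

variable {C : Type u} [Category.{v} C] [HasInitial C] [HasTerminal C]

theorem statement0_general (Cof Fib : MorphismProperty C)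
    (hFib : IsFibClass Fib)
    {U V W : C} (j : U ⟶ V) (i : V ⟶ W) (hj : Cof j)
    (hi : IsAcyclicCof Cof Fib i) (hji : IsAcyclicCof Cof Fib (j ≫ i)) :
    IsAcyclicCof Cof Fib j := by
  refine ⟨hj, fun p hp hX hY => ?_⟩
  have := hi.2 _ hY hY hFib.terminal_fibrant
  have := hji.2 p hp hX hY
  exact HasLiftingProperty.of_comp_left_of_terminal j i p

/-- If `j` and `i` are cofibrations such that `i` and `i ∘ j` are acyclic
cofibrations, then `j` is an acyclic cofibration. -/
theorem statement0 (Cof Fib : MorphismProperty C)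
    (hCof : IsCofClass Cof) (hFib : IsFibClass Fib)
    {U V W : C} (j : U ⟶ V) (i : V ⟶ W) (hj : Cof j)
    (hi : IsAcyclicCof Cof Fib i) (hji : IsAcyclicCof Cof Fib (j ≫ i)) :
    IsAcyclicCof Cof Fib j :=
  statement0_general Cof Fib hFib j i hj hi hji

end WMC
end

section
/- Let C be a category equipped with a class of cofibrations and a class of fibrations, let X be a cofibrant object and Y a fibrant object such that the coproduct X ⊔ X and the product Y × Y exist, and let f, g : X → Y be two morphisms. If X admits a relative weak cylinder object IX (for 0 → X) and Y admits a relative weak path object PY (for Y → 1), then f and g are homotopic relative to IX if and only if they are homotopic relative to PY. -/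
/-!
Both directions are a single lifting argument, started from a constant homotopy of `f` with
itself on each side: `f` lifts through the acyclic fibration `T ⟶ Y` of the path object and
extends along the acyclic cofibration `X ⟶ D` of the cylinder object.

Given a cylinder homotopy `H : I X ⟶ Y`, lift the constant path at `f` along the acyclic
cofibration `X ⟶ I X` (first end) against the fibration `P Y ⟶ Y × Y`, over the map
`(const f, H) : I X ⟶ Y × Y`; restricting the lift to the second end is a path homotopy.
Dually, given a path homotopy `K`, extend `(const f, K) : X ⊔ X ⟶ P Y` along the cofibration
`X ⊔ X ⟶ I X` against the acyclic fibration `P Y ⟶ Y` (first endpoint); following it by the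
second endpoint is a cylinder homotopy. These lifts need `Y × Y` fibrant and `X ⊔ X`
cofibrant, which holds because they are the pullback over `1` and the pushout under `0`.
-/

open CategoryTheory CategoryTheory.Limits

universe w v u

namespace WMC

variable {C : Type u} [Category.{v} C]

variable [HasInitial C] [HasTerminal C]

/-- A (relative) weak cylinder object for the cofibration `0 ⟶ X`, i.e. a weak cylinder
object for a cofibrant object `X`.  It includes the data of the coproduct `X ⊔ X`. -/
structure WeakCylinder (Cof Fib : MorphismProperty C) (X : C) where
  XX : C
  in₀ : X ⟶ XX
  in₁ : X ⟶ XX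
  isCoprod : IsColimit (BinaryCofan.mk in₀ in₁)
  Cyl : C
  D : C
  ι : XX ⟶ Cyl
  ρ : Cyl ⟶ D
  e : X ⟶ D
  ι_cof : Cof ι
  in₀_ι_acyclic : IsAcyclicCof Cof Fib (in₀ ≫ ι)
  e_acyclic : IsAcyclicCof Cof Fib e
  fac₀ : in₀ ≫ ι ≫ ρ = e
  fac₁ : in₁ ≫ ι ≫ ρ = e

/-- A (relative) weak path object for the fibration `Y ⟶ 1`, i.e. a weak path object
for a fibrant object `Y`.  It includes the data of the product `Y × Y`. -/
structure WeakPath (Cof Fib : MorphismProperty C) (Y : C) where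
  YY : C
  pr₀ : YY ⟶ Y
  pr₁ : YY ⟶ Y
  isProd : IsLimit (BinaryFan.mk pr₀ pr₁)
  Pth : C
  T : C
  π : Pth ⟶ YY
  σ : T ⟶ Pth
  e : T ⟶ Y
  π_fib : Fib π
  π_pr₀_acyclic : IsAcyclicFib Cof Fib (π ≫ pr₀)
  e_acyclic : IsAcyclicFib Cof Fib e
  fac₀ : σ ≫ π ≫ pr₀ = e
  fac₁ : σ ≫ π ≫ pr₁ = e

/-- `f` and `g` are homotopic relative to the weak cylinder object `W`:
the map `(f, g) : X ⊔ X ⟶ Y` factors through `ι : X ⊔ X ⟶ I X`. -/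
def CylHomotopic {Cof Fib : MorphismProperty C} {X Y : C}
    (W : WeakCylinder Cof Fib X) (f g : X ⟶ Y) : Prop :=
  ∃ h : W.Cyl ⟶ Y, W.in₀ ≫ W.ι ≫ h = f ∧ W.in₁ ≫ W.ι ≫ h = g

/-- `f` and `g` are homotopic relative to the weak path object `P`:
the map `(f, g) : X ⟶ Y × Y` factors through `π : P Y ⟶ Y × Y`. -/
def PathHomotopic {Cof Fib : MorphismProperty C} {X Y : C}
    (P : WeakPath Cof Fib Y) (f g : X ⟶ Y) : Prop :=
  ∃ h : X ⟶ P.Pth, h ≫ P.π ≫ P.pr₀ = f ∧ h ≫ P.π ≫ P.pr₁ = g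

section

variable {Cof Fib : MorphismProperty C} {X Y : C}

omit [HasInitial C] in
lemma fibrant_of_fib (hFib : IsFibClass Fib) {p : X ⟶ Y} (hp : Fib p)
    (hY : Fibrant Fib Y) : Fibrant Fib X := by
  rw [Fibrant, ← terminal.comp_from p]
  exact hFib.comp_mem _ _ hp hY

omit [HasTerminal C] in
lemma cofibrant_of_cof (hCof : IsCofClass Cof) {A B : C} {i : A ⟶ B} (hi : Cof i)
    (hA : Cofibrant Cof A) : Cofibrant Cof B := by
  rw [Cofibrant, ← initial.to_comp i]
  exact hCof.comp_mem _ _ hA hi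

omit [HasInitial C] in
lemma fibrant_of_isLimit_binaryFan (hFib : IsFibClass Fib) {YY : C} (hY : Fibrant Fib Y)
    {pr₀ pr₁ : YY ⟶ Y} (h : IsLimit (BinaryFan.mk pr₀ pr₁)) : Fibrant Fib YY := by
  obtain ⟨Pb, fst, snd, hPb, hfst⟩ :=
    hFib.pullback_mem (terminal.from Y) (terminal.from Y) hY hFib.terminal_fibrant hY
  have hPb_fibrant : Fibrant Fib Pb := fibrant_of_fib hFib hfst hY
  let e : YY ≅ Pb := (IsPullback.of_is_product' h terminalIsTerminal).isoIsPullback _ _ hPb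
  exact fibrant_of_fib hFib (hFib.iso_mem e.hom inferInstance hPb_fibrant) hPb_fibrant

omit [HasTerminal C] in
lemma cofibrant_of_isColimit_binaryCofan (hCof : IsCofClass Cof) {XX : C}
    (hX : Cofibrant Cof X) {in₀ in₁ : X ⟶ XX} (h : IsColimit (BinaryCofan.mk in₀ in₁)) :
    Cofibrant Cof XX := by
  obtain ⟨Po, inl, inr, hPo, hinl⟩ :=
    hCof.pushout_mem (initial.to X) (initial.to X) hX hCof.initial_cofibrant hX
  have hPo_cofibrant : Cofibrant Cof Po := cofibrant_of_cof hCof hinl hX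
  let e : Po ≅ XX := hPo.isoIsPushout _ _ (IsPushout.of_is_coproduct' h initialIsInitial)
  exact cofibrant_of_cof hCof (hCof.iso_mem e.hom inferInstance hPo_cofibrant) hPo_cofibrant

omit [HasTerminal C] in
lemma IsAcyclicFib.exists_lift (hCof : IsCofClass Cof) {T : C} {p : T ⟶ Y}
    (hp : IsAcyclicFib Cof Fib p) (hX : Cofibrant Cof X) (f : X ⟶ Y) :
    ∃ l : X ⟶ T, l ≫ p = f := by
  have := hp.2 (initial.to X) hX hCof.initial_cofibrant hX
  let sq : CommSq (initial.to T) (initial.to X) p f := ⟨initial.hom_ext _ _⟩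
  exact ⟨sq.lift, sq.fac_right⟩

omit [HasInitial C] in
lemma IsAcyclicCof.exists_extension (hFib : IsFibClass Fib) {D : C} {i : X ⟶ D}
    (hi : IsAcyclicCof Cof Fib i) (hY : Fibrant Fib Y) (f : X ⟶ Y) :
    ∃ q : D ⟶ Y, i ≫ q = f := by
  have := hi.2 (terminal.from Y) hY hY hFib.terminal_fibrant
  let sq : CommSq f i (terminal.from Y) (terminal.from D) := ⟨terminal.hom_ext _ _⟩
  exact ⟨sq.lift, sq.fac_left⟩

omit [HasTerminal C] in
lemma PathHomotopic.refl (hCof : IsCofClass Cof) (hX : Cofibrant Cof X)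
    (P : WeakPath Cof Fib Y) (f : X ⟶ Y) : PathHomotopic P f f := by
  obtain ⟨l, hl⟩ := P.e_acyclic.exists_lift hCof hX f
  exact ⟨l ≫ P.σ, by simp [P.fac₀, hl], by simp [P.fac₁, hl]⟩

omit [HasInitial C] in
lemma CylHomotopic.refl (hFib : IsFibClass Fib) (hY : Fibrant Fib Y)
    (W : WeakCylinder Cof Fib X) (f : X ⟶ Y) : CylHomotopic W f f := by
  obtain ⟨q, hq⟩ := W.e_acyclic.exists_extension hFib hY f
  exact ⟨W.ρ ≫ q, by rw [reassoc_of% W.fac₀, hq], by rw [reassoc_of% W.fac₁, hq]⟩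

omit [HasInitial C] in
lemma WeakCylinder.hom_ext (W : WeakCylinder Cof Fib X) {Z : C} {a b : W.XX ⟶ Z}
    (h₀ : W.in₀ ≫ a = W.in₀ ≫ b) (h₁ : W.in₁ ≫ a = W.in₁ ≫ b) : a = b :=
  BinaryCofan.IsColimit.hom_ext W.isCoprod h₀ h₁

omit [HasInitial C] in
lemma WeakCylinder.exists_desc (W : WeakCylinder Cof Fib X) {Z : C} (a b : X ⟶ Z) :
    ∃ t : W.XX ⟶ Z, W.in₀ ≫ t = a ∧ W.in₁ ≫ t = b :=
  ⟨_, (BinaryCofan.IsColimit.desc' W.isCoprod a b).2⟩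

omit [HasTerminal C] in
lemma WeakPath.hom_ext (P : WeakPath Cof Fib Y) {Z : C} {a b : Z ⟶ P.YY}
    (h₀ : a ≫ P.pr₀ = b ≫ P.pr₀) (h₁ : a ≫ P.pr₁ = b ≫ P.pr₁) : a = b :=
  BinaryFan.IsLimit.hom_ext P.isProd h₀ h₁

omit [HasTerminal C] in
lemma WeakPath.exists_lift (P : WeakPath Cof Fib Y) {Z : C} (a b : Z ⟶ Y) :
    ∃ t : Z ⟶ P.YY, t ≫ P.pr₀ = a ∧ t ≫ P.pr₁ = b :=
  ⟨_, (BinaryFan.IsLimit.lift' P.isProd a b).2⟩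

lemma CylHomotopic.pathHomotopic (hCof : IsCofClass Cof) (hFib : IsFibClass Fib)
    (hX : Cofibrant Cof X) (hY : Fibrant Fib Y) {W : WeakCylinder Cof Fib X}
    (P : WeakPath Cof Fib Y) {f g : X ⟶ Y} (h : CylHomotopic W f g) : PathHomotopic P f g := by
  obtain ⟨H, hH₀, hH₁⟩ := h
  obtain ⟨c, hc₀, hc₁⟩ := PathHomotopic.refl hCof hX P f
  obtain ⟨r, hr₀, hr₁⟩ := CylHomotopic.refl hFib hY W f
  obtain ⟨b, hb₀, hb₁⟩ := P.exists_lift r H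
  have hYY : Fibrant Fib P.YY := fibrant_of_isLimit_binaryFan hFib hY P.isProd
  have := W.in₀_ι_acyclic.2 P.π P.π_fib (fibrant_of_fib hFib P.π_fib hYY) hYY
  have sq : CommSq c (W.in₀ ≫ W.ι) P.π b := ⟨P.hom_ext
    (by simp [hb₀, hc₀, hr₀]) (by simp [hb₁, hc₁, hH₀])⟩
  exact ⟨W.in₁ ≫ W.ι ≫ sq.lift, by simp [sq.fac_right_assoc, hb₀, hr₁],
    by simp [sq.fac_right_assoc, hb₁, hH₁]⟩

lemma PathHomotopic.cylHomotopic (hCof : IsCofClass Cof) (hFib : IsFibClass Fib)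
    (hX : Cofibrant Cof X) (hY : Fibrant Fib Y) (W : WeakCylinder Cof Fib X)
    {P : WeakPath Cof Fib Y} {f g : X ⟶ Y} (h : PathHomotopic P f g) : CylHomotopic W f g := by
  obtain ⟨K, hK₀, hK₁⟩ := h
  obtain ⟨c, hc₀, hc₁⟩ := PathHomotopic.refl hCof hX P f
  obtain ⟨r, hr₀, hr₁⟩ := CylHomotopic.refl hFib hY W f
  obtain ⟨t, ht₀, ht₁⟩ := W.exists_desc c K
  have hXX : Cofibrant Cof W.XX := cofibrant_of_isColimit_binaryCofan hCof hX W.isCoprod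
  have := P.π_pr₀_acyclic.2 W.ι W.ι_cof hXX (cofibrant_of_cof hCof W.ι_cof hXX)
  have sq : CommSq t W.ι (P.π ≫ P.pr₀) r := ⟨W.hom_ext
    (by rw [reassoc_of% ht₀, hc₀, hr₀]) (by rw [reassoc_of% ht₁, hK₀, hr₁])⟩
  exact ⟨sq.lift ≫ P.π ≫ P.pr₁, by simp [sq.fac_left_assoc, reassoc_of% ht₀, hc₁],
    by simp [sq.fac_left_assoc, reassoc_of% ht₁, hK₁]⟩

end

/-- homotopy relative to a weak cylinder object for `X` agrees with homotopy
relative to a weak path object for `Y`, for maps from a cofibrant `X` to a fibrant `Y`. -/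
theorem statement1 (Cof Fib : MorphismProperty C)
    (hCof : IsCofClass Cof) (hFib : IsFibClass Fib)
    {X Y : C} (hX : Cofibrant Cof X) (hY : Fibrant Fib Y)
    (W : WeakCylinder Cof Fib X) (P : WeakPath Cof Fib Y) (f g : X ⟶ Y) :
    CylHomotopic W f g ↔ PathHomotopic P f g :=
  ⟨CylHomotopic.pathHomotopic hCof hFib hX hY P, PathHomotopic.cylHomotopic hCof hFib hX hY W⟩

end WMC
end

section
/- Let C be a category, D ⊆ C a full subcategory, W a class of morphisms of C which is stable under composition, and W' a class of morphisms of D. Assume: (a) for every object c of C there is a morphism w : c → d in W with d in D; (b) for every morphism w : c → d in W with d in D, and every morphism c → d' with d' in D, there is a morphism d → d' making the triangle commute; (c) any two morphisms d → d' making such a triangle commute are identified by the localization functor D → D[W'⁻¹]. Then the functor D[W'⁻¹] → C[(W ∪ W')⁻¹] induced by the inclusion D ⊆ C is an equivalence of categories, where W' is viewed as a class of morphisms of C via the inclusion. -/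
/-!
Choose for every `c` a morphism `w c : c ⟶ d c` in `W` with `d c` in `D`. By (b) every
`f : c ⟶ c'` lifts to a morphism `d c ⟶ d c'` of `D`, unique in `D[W'⁻¹]` by (c), so
`c ↦ d c` is a functor `R : C ⥤ D[W'⁻¹]`. Lifts along morphisms of `W` become invertible,
so `R` inverts `W ∪ W'`. The morphisms `w c` then give isomorphisms `Q ≅ ι ⋙ R` and
`R ⋙ Φ ≅ L`, where `Φ : D[W'⁻¹] ⥤ C[(W ∪ W')⁻¹]` is induced by the inclusion, so `Φ` and
the functor induced by `R` are inverse equivalences.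
-/

open CategoryTheory CategoryTheory.Limits

universe v u

namespace LocExt

variable {C : Type u} [Category.{v} C]

/-- The union `W ∪ W'` of a class of morphisms of `C` and a class of morphisms of the
full subcategory on `P`, viewed as a class of morphisms of `C`. -/
def unionClass (P : C → Prop) (W : MorphismProperty C)
    (W' : MorphismProperty (ObjectProperty.FullSubcategory P)) : MorphismProperty C :=
  fun X Y f => W f ∨ ∃ (hX : P X) (hY : P Y),
    W' (ObjectProperty.homMk (X := (⟨X, hX⟩ : ObjectProperty.FullSubcategory P))
      (Y := (⟨Y, hY⟩ : ObjectProperty.FullSubcategory P)) f)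

open ObjectProperty MorphismProperty

variable (P : C → Prop) (W : MorphismProperty C) (W' : MorphismProperty (FullSubcategory P))

/-- Condition (b). -/
def HasLifts : Prop :=
  ∀ {c : C} {d d' : FullSubcategory P} (w : c ⟶ d.obj), W w → ∀ f : c ⟶ d'.obj,
    ∃ g : d ⟶ d', w ≫ g.hom = f

variable {P} in
/-- Condition (c). -/
def LiftsAreEqualized : Prop :=
  ∀ {c : C} {d d' : FullSubcategory P} (w : c ⟶ d.obj), W w → ∀ g₁ g₂ : d ⟶ d',
    w ≫ g₁.hom = w ≫ g₂.hom → AreEqualizedByLocalization W' g₁ g₂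

variable {P W W'}

lemma isIso_Q_map_of_mem_hom (hb : HasLifts P W) (hc : LiftsAreEqualized W W')
    {d₀ d₁ : FullSubcategory P} (u : d₀ ⟶ d₁) (hu : W u.hom) : IsIso (W'.Q.map u) := by
  obtain ⟨r, hr⟩ := hb u.hom hu (𝟙 d₀.obj)
  have retraction : u ≫ r = 𝟙 d₀ := InducedCategory.hom_ext (by simpa using hr)
  refine ⟨W'.Q.map r, by rw [← W'.Q.map_comp, retraction, W'.Q.map_id], ?_⟩
  rw [← W'.Q.map_comp, ← W'.Q.map_id]
  exact hc u.hom hu _ _ (by simp [reassoc_of% hr])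

lemma isIso_Q_map_of_comp_mem (hb : HasLifts P W) (hc : LiftsAreEqualized W W')
    {c : C} {d₀ d₁ : FullSubcategory P} (w : c ⟶ d₀.obj) (g : d₀ ⟶ d₁) (hw : W w)
    (hwg : W (w ≫ g.hom)) : IsIso (W'.Q.map g) := by
  obtain ⟨h, hh⟩ := hb (w ≫ g.hom) hwg w
  refine ⟨W'.Q.map h, ?_, ?_⟩
  · rw [← W'.Q.map_comp, ← W'.Q.map_id]
    exact hc w hw _ _ (by simpa using hh)
  · rw [← W'.Q.map_comp, ← W'.Q.map_id]
    exact hc (w ≫ g.hom) hwg _ _ (by simp [reassoc_of% hh])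

section Reflection

variable (hb : HasLifts P W) {d : C → FullSubcategory P} {w : ∀ c, c ⟶ (d c).obj}
  (hw : ∀ c, W (w c))

noncomputable def reflectionLift {c c' : C} (f : c ⟶ c') : d c ⟶ d c' :=
  (hb (w c) (hw c) (f ≫ w c')).choose

lemma comp_reflectionLift_hom {c c' : C} (f : c ⟶ c') :
    w c ≫ (reflectionLift hb hw f).hom = f ≫ w c' :=
  (hb (w c) (hw c) (f ≫ w c')).choose_spec

variable (hc : LiftsAreEqualized W W')

noncomputable def reflection : C ⥤ W'.Localization where
  obj c := W'.Q.obj (d c)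
  map f := W'.Q.map (reflectionLift hb hw f)
  map_id c := by
    rw [← W'.Q.map_id]
    exact hc (w c) (hw c) _ _ (by simp [comp_reflectionLift_hom])
  map_comp f f' := by
    rw [← W'.Q.map_comp]
    exact hc (w _) (hw _) _ _
      (by simp [reassoc_of% comp_reflectionLift_hom hb hw, comp_reflectionLift_hom])

noncomputable def reflectionUnitIso : W'.Q ≅ ι P ⋙ reflection hb hw hc :=
  NatIso.ofComponents
    (fun d₀ => @asIso _ _ _ _ (W'.Q.map (homMk (w d₀.obj) : d₀ ⟶ d d₀.obj))
      (isIso_Q_map_of_mem_hom hb hc _ (hw _)))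
    (fun f => by
      have square : f ≫ homMk (w _) = homMk (w _) ≫ reflectionLift hb hw ((ι P).map f) :=
        InducedCategory.hom_ext (comp_reflectionLift_hom hb hw _).symm
      change W'.Q.map f ≫ W'.Q.map (homMk (w _)) =
        W'.Q.map (homMk (w _)) ≫ W'.Q.map (reflectionLift hb hw ((ι P).map f))
      rw [← W'.Q.map_comp, ← W'.Q.map_comp, square])

lemma reflection_inverts [W.IsStableUnderComposition] :
    (unionClass P W W').IsInvertedBy (reflection hb hw hc) := by
  rintro X Y f (hf | ⟨hX, hY, hf⟩)
  · exact isIso_Q_map_of_comp_mem hb hc (w X) _ (hw X)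
      (by rw [comp_reflectionLift_hom]; exact W.comp_mem f (w Y) hf (hw Y))
  · exact (NatIso.isIso_map_iff (reflectionUnitIso hb hw hc)
      (homMk f : (⟨X, hX⟩ : FullSubcategory P) ⟶ ⟨Y, hY⟩)).1
      (Localization.inverts W'.Q W' _ hf)

variable {E : Type*} [Category E] (L : C ⥤ E) [L.IsLocalization (unionClass P W W')]
  (Φ : W'.Localization ⥤ E) [Localization.Lifting W'.Q W' (ι P ⋙ L) Φ]

noncomputable def reflectionCounitIso : reflection hb hw hc ⋙ Φ ≅ L :=
  NatIso.ofComponents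
    (fun c => (Localization.Lifting.iso W'.Q W' (ι P ⋙ L) Φ).app (d c) ≪≫
      (Localization.isoOfHom L (unionClass P W W') (w c) (Or.inl (hw c))).symm)
    (fun f => by
      have h :=
        (Localization.Lifting.iso W'.Q W' (ι P ⋙ L) Φ).hom.naturality (reflectionLift hb hw f)
      dsimp [reflection] at h ⊢
      rw [reassoc_of% h, Category.assoc]
      congr 1
      rw [Iso.comp_inv_eq, Category.assoc, Iso.eq_inv_comp]
      change L.map (w _) ≫ _ = _ ≫ L.map (w _)
      rw [← L.map_comp, ← L.map_comp, comp_reflectionLift_hom])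

end Reflection

theorem isLocalization_ι_comp [W.IsStableUnderComposition]
    (ha : ∀ c : C, ∃ (d : FullSubcategory P) (w : c ⟶ d.obj), W w)
    (hb : HasLifts P W) (hc : LiftsAreEqualized W W') {E : Type*} [Category E] (L : C ⥤ E)
    [L.IsLocalization (unionClass P W W')] :
    (ι P ⋙ L).IsLocalization W' := by
  choose d w hw using ha
  let R := reflection hb hw hc
  have hL : W'.IsInvertedBy (ι P ⋙ L) := fun X Y f hf =>
    Localization.inverts L (unionClass P W W') f.hom (Or.inr ⟨X.2, Y.2, hf⟩)
  have hR := reflection_inverts hb hw hc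
  let Ψ := Localization.lift R hR L
  let α : (ι P ⋙ L) ⋙ Ψ ≅ W'.Q := Functor.associator _ _ _ ≪≫
    Functor.isoWhiskerLeft _ (Localization.fac R hR L) ≪≫ (reflectionUnitIso hb hw hc).symm
  exact ⟨hL, Localization.isEquivalence W'.Q W' L (unionClass P W W') (ι P ⋙ L)
    (Localization.Construction.lift _ hL) R Ψ α (reflectionCounitIso hb hw hc L _)⟩

/-- under conditions (a), (b), (c), the composite
`D = FullSubcategory P ⥤ C ⥤ C[(W ∪ W')⁻¹]` is a localization of `D` at `W'`;
equivalently, the induced functor `D[W'⁻¹] ⥤ C[(W ∪ W')⁻¹]` is an equivalence. -/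
theorem statement4 (P : C → Prop) (W : MorphismProperty C)
    (W' : MorphismProperty (ObjectProperty.FullSubcategory P))
    (hWcomp : ∀ {X Y Z : C} (f : X ⟶ Y) (g : Y ⟶ Z), W f → W g → W (f ≫ g))
    (ha : ∀ c : C, ∃ (d : C) (_ : P d) (w : c ⟶ d), W w)
    (hb : ∀ {c : C} {d d' : ObjectProperty.FullSubcategory P} (w : c ⟶ d.obj), W w → ∀ (f : c ⟶ d'.obj),
      ∃ g : d ⟶ d', w ≫ (ObjectProperty.ι P).map g = f)
    (hc : ∀ {c : C} {d d' : ObjectProperty.FullSubcategory P} (w : c ⟶ d.obj), W w → ∀ (f : c ⟶ d'.obj)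
      (g₁ g₂ : d ⟶ d'), w ≫ (ObjectProperty.ι P).map g₁ = f →
      w ≫ (ObjectProperty.ι P).map g₂ = f →
      W'.Q.map g₁ = W'.Q.map g₂) :
    (ObjectProperty.ι P ⋙ (unionClass P W W').Q).IsLocalization W' := by
  have : W.IsStableUnderComposition := ⟨hWcomp⟩
  refine isLocalization_ι_comp (fun c => ?_) hb (fun w hw g₁ g₂ h => hc w hw _ g₁ g₂ h rfl) _
  obtain ⟨d, hd, w, hw⟩ := ha c
  exact ⟨⟨d, hd⟩, w, hw⟩

end LocExt
end

section
/- Let C be a weak model category. Given a commutative square with left leg a cofibration i : A → B between cofibrant objects, right leg an equivalence f : X → Y between fibrant objects, top w : A → X and bottom b : B → Y (so f ∘ w = b ∘ i), there exists a morphism t : B → X with t ∘ i = w (the lower triangle is not required to commute). -/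
open CategoryTheory CategoryTheory.Limits

universe w v u

namespace WMC

variable {C : Type u} [Category.{v} C]

variable [HasInitial C] [HasTerminal C]

/-- A relative strong cylinder object for a cofibration `i : A ⟶ B`: a factorization
`B ⊔_A B ⟶ I_A B ⟶ B` of the codiagonal, with the first map a cofibration whose
precomposition with the first coprojection is an acyclic cofibration. -/
structure RelStrongCylinder (Cof Fib : MorphismProperty C) {A B : C} (i : A ⟶ B) where
  BB : C
  in₀ : B ⟶ BB
  in₁ : B ⟶ BB
  isPushout : IsPushout i i in₀ in₁
  Cyl : C
  ι : BB ⟶ Cyl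
  ρ : Cyl ⟶ B
  ι_cof : Cof ι
  in₀_ι_acyclic : IsAcyclicCof Cof Fib (in₀ ≫ ι)
  fac₀ : in₀ ≫ ι ≫ ρ = 𝟙 B
  fac₁ : in₁ ≫ ι ≫ ρ = 𝟙 B

/-- A relative strong path object for a fibration `q : Y ⟶ X`: a factorization
`Y ⟶ P_X Y ⟶ Y ×_X Y` of the relative diagonal, with the second map a fibration whose
postcomposition with the first projection is an acyclic fibration. -/
structure RelStrongPath (Cof Fib : MorphismProperty C) {X Y : C} (q : Y ⟶ X) where
  YY : C
  pr₀ : YY ⟶ Y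
  pr₁ : YY ⟶ Y
  isPullback : IsPullback pr₀ pr₁ q q
  Pth : C
  π : Pth ⟶ YY
  σ : Y ⟶ Pth
  π_fib : Fib π
  π_pr₀_acyclic : IsAcyclicFib Cof Fib (π ≫ pr₀)
  fac₀ : σ ≫ π ≫ pr₀ = 𝟙 Y
  fac₁ : σ ≫ π ≫ pr₁ = 𝟙 Y

/-- A weak model category: a class of cofibrations and a class of fibrations satisfying
the factorization axiom, the cylinder axiom and the path object axiom. -/
structure IsWeakModel (Cof Fib : MorphismProperty C) : Prop where
  cofClass : IsCofClass Cof
  fibClass : IsFibClass Fib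
  factor_cof_afib : ∀ {X Y : C} (f : X ⟶ Y), Cofibrant Cof X → Fibrant Fib Y →
    ∃ (Z : C) (i : X ⟶ Z) (q : Z ⟶ Y), Cof i ∧ IsAcyclicFib Cof Fib q ∧ i ≫ q = f
  factor_acof_fib : ∀ {X Y : C} (f : X ⟶ Y), Cofibrant Cof X → Fibrant Fib Y →
    ∃ (Z : C) (i : X ⟶ Z) (q : Z ⟶ Y), IsAcyclicCof Cof Fib i ∧ Fib q ∧ i ≫ q = f
  cylinder : ∀ {A B : C} (i : A ⟶ B), Cof i → Cofibrant Cof A → Fibrant Fib B →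
    Nonempty (RelStrongCylinder Cof Fib i)
  pathObj : ∀ {X Y : C} (q : Y ⟶ X), Fib q → Cofibrant Cof Y → Fibrant Fib X →
    Nonempty (RelStrongPath Cof Fib q)

/-- The full subcategory of objects that are cofibrant or fibrant. -/
abbrev Ccf (Cof Fib : MorphismProperty C) : Type u :=
  ObjectProperty.FullSubcategory (fun X : C => Cofibrant Cof X ∨ Fibrant Fib X)

/-- The class of morphisms of `C^{c∪f}` consisting of the acyclic cofibrations with
cofibrant domain and the acyclic fibrations with fibrant target. -/
def WcfProp (Cof Fib : MorphismProperty C) : MorphismProperty (Ccf Cof Fib) :=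
  fun X Y f =>
    (IsAcyclicCof Cof Fib ((ObjectProperty.ι _).map f) ∧ Cofibrant Cof X.obj) ∨
    (IsAcyclicFib Cof Fib ((ObjectProperty.ι _).map f) ∧ Fibrant Fib Y.obj)

/-- A morphism of `C` between fibrant-or-cofibrant objects, seen in `C^{c∪f}`. -/
def homCcf (Cof Fib : MorphismProperty C) {X Y : C}
    (hX : Cofibrant Cof X ∨ Fibrant Fib X) (hY : Cofibrant Cof Y ∨ Fibrant Fib Y)
    (f : X ⟶ Y) : (⟨X, hX⟩ : Ccf Cof Fib) ⟶ (⟨Y, hY⟩ : Ccf Cof Fib) := ObjectProperty.homMk f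

/-- A morphism of `C^{c∪f}` is an equivalence if it becomes invertible in the localization
of `C^{c∪f}` at the acyclic cofibrations with cofibrant domain and the acyclic fibrations
with fibrant target. -/
def IsEquivCcf (Cof Fib : MorphismProperty C) {X Y : Ccf Cof Fib} (f : X ⟶ Y) : Prop :=
  IsIso ((WcfProp Cof Fib).Q.map f)

/-!
Factor `w` as a cofibration `A ⟶ X'` followed by an acyclic fibration `p : X' ⟶ X`, push `i` out
along `A ⟶ X'` to `P`, and factor the induced map `P ⟶ Y` as a cofibration followed by an
acyclic fibration `Y' ⟶ Y`. The composite `j : X' ⟶ P ⟶ Y'` is a cofibration between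
bifibrant objects, and by two-out-of-three in the localization it is an equivalence.

Bifibrant replacement defines a functor from `C^{c∪f}` to the homotopy category of bifibrant
objects which inverts the acyclic (co)fibrations, so it factors through the localization and
`j` becomes a homotopy equivalence. For a homotopy inverse `g`, `j ≫ g` is homotopic to `𝟙 X'`
and extends along `j`, so by homotopy extension `𝟙 X'` extends along `j` as well: `j` has a
retraction `r`, and `B ⟶ P ⟶ Y' ⟶ X' ⟶ X` (through `r` and `p`) is the required map.
-/

section

variable {Cof Fib : MorphismProperty C}

omit [HasInitial C] [HasTerminal C] in
theorem exists_lift_of_hasLiftingProperty {A B X Y : C} {i : A ⟶ B} {p : X ⟶ Y}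
    (h : HasLiftingProperty i p) {f : A ⟶ X} {g : B ⟶ Y} (w : f ≫ p = i ≫ g) :
    ∃ l : B ⟶ X, i ≫ l = f ∧ l ≫ p = g :=
  have sq : CommSq f i p g := ⟨w⟩
  ⟨sq.lift, sq.fac_left, sq.fac_right⟩

variable (Cof Fib) in
def Bifibrant (X : C) : Prop :=
  Cofibrant Cof X ∧ Fibrant Fib X

namespace IsWeakModel

variable (hWM : IsWeakModel Cof Fib)
include hWM

theorem cofibrant_of_cof {X Y : C} {j : X ⟶ Y} (hj : Cof j) (hX : Cofibrant Cof X) :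
    Cofibrant Cof Y := by
  rw [Cofibrant, initial.hom_ext (initial.to Y) (initial.to X ≫ j)]
  exact hWM.cofClass.comp_mem _ _ hX hj

theorem fibrant_of_fib {X Y : C} {p : X ⟶ Y} (hp : Fib p) (hY : Fibrant Fib Y) :
    Fibrant Fib X := by
  rw [Fibrant, terminal.hom_ext (terminal.from X) (p ≫ terminal.from Y)]
  exact hWM.fibClass.comp_mem _ _ hp hY

theorem cof_of_isPushout {A X Y P : C} {f : A ⟶ X} {j : A ⟶ Y} {inl : X ⟶ P} {inr : Y ⟶ P}
    (hpo : IsPushout f j inl inr) (hj : Cof j) (hA : Cofibrant Cof A) (hX : Cofibrant Cof X) :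
    Cof inl := by
  obtain ⟨P', inl', inr', hpo', hinl'⟩ := hWM.cofClass.pushout_mem j f hj hA hX
  rw [← hpo'.inl_isoIsPushout_hom _ _ hpo]
  exact hWM.cofClass.comp_mem _ _ hinl'
    (hWM.cofClass.iso_mem _ inferInstance (hWM.cofibrant_of_cof hinl' hX))

theorem fib_of_isPullback {A X Y P : C} {f : X ⟶ A} {p : Y ⟶ A} {fst : P ⟶ X} {snd : P ⟶ Y}
    (hpb : IsPullback fst snd f p) (hp : Fib p) (hA : Fibrant Fib A) (hX : Fibrant Fib X) :
    Fib fst := by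
  obtain ⟨P', fst', snd', hpb', hfst'⟩ := hWM.fibClass.pullback_mem p f hp hA hX
  rw [← hpb.isoIsPullback_hom_fst _ _ hpb']
  exact hWM.fibClass.comp_mem _ _
    (hWM.fibClass.iso_mem _ inferInstance (hWM.fibrant_of_fib hfst' hX)) hfst'

theorem isAcyclicCof_id {X : C} (hX : Cofibrant Cof X) : IsAcyclicCof Cof Fib (𝟙 X) :=
  ⟨hWM.cofClass.iso_mem _ inferInstance hX, fun _ _ _ _ => inferInstance⟩

theorem isAcyclicFib_id {X : C} (hX : Fibrant Fib X) : IsAcyclicFib Cof Fib (𝟙 X) :=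
  ⟨hWM.fibClass.iso_mem _ inferInstance hX, fun _ _ _ _ => inferInstance⟩

theorem isAcyclicCof_comp {X Y Z : C} {f : X ⟶ Y} {g : Y ⟶ Z}
    (hf : IsAcyclicCof Cof Fib f) (hg : IsAcyclicCof Cof Fib g) :
    IsAcyclicCof Cof Fib (f ≫ g) :=
  ⟨hWM.cofClass.comp_mem _ _ hf.1 hg.1, fun p hp hX hY =>
    have := hf.2 p hp hX hY
    have := hg.2 p hp hX hY
    inferInstance⟩

theorem isAcyclicFib_comp {X Y Z : C} {f : X ⟶ Y} {g : Y ⟶ Z}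
    (hf : IsAcyclicFib Cof Fib f) (hg : IsAcyclicFib Cof Fib g) :
    IsAcyclicFib Cof Fib (f ≫ g) :=
  ⟨hWM.fibClass.comp_mem _ _ hf.1 hg.1, fun i hi hA hB =>
    have := hf.2 i hi hA hB
    have := hg.2 i hi hA hB
    inferInstance⟩

theorem exists_extension_of_isAcyclicCof {Z Z' T : C} {j : Z ⟶ Z'}
    (hj : IsAcyclicCof Cof Fib j) (hT : Fibrant Fib T) (g : Z ⟶ T) :
    ∃ l : Z' ⟶ T, j ≫ l = g := by
  obtain ⟨l, hl, -⟩ := exists_lift_of_hasLiftingProperty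
    (hj.2 _ hT hT hWM.fibClass.terminal_fibrant) (terminal.hom_ext (g ≫ _) (j ≫ terminal.from Z'))
  exact ⟨l, hl⟩

theorem exists_lift_of_isAcyclicFib {S V T : C} {q : V ⟶ T}
    (hq : IsAcyclicFib Cof Fib q) (hS : Cofibrant Cof S) (g : S ⟶ T) :
    ∃ l : S ⟶ V, l ≫ q = g := by
  obtain ⟨l, -, hl⟩ := exists_lift_of_hasLiftingProperty
    (hq.2 _ hS hWM.cofClass.initial_cofibrant hS) (initial.hom_ext (initial.to V ≫ q) (_ ≫ g))
  exact ⟨l, hl⟩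

theorem exists_relStrongPath {V : C} (hV : Bifibrant Cof Fib V) :
    Nonempty (RelStrongPath Cof Fib (terminal.from V)) :=
  hWM.pathObj _ hV.2 hV.1 hWM.fibClass.terminal_fibrant

theorem exists_relStrongCylinder {U : C} (hU : Bifibrant Cof Fib U) :
    Nonempty (RelStrongCylinder Cof Fib (initial.to U)) :=
  hWM.cylinder _ hU.1 hWM.cofClass.initial_cofibrant hU.2

theorem fibrant_YY {V : C} (hV : Fibrant Fib V) (P : RelStrongPath Cof Fib (terminal.from V)) :
    Fibrant Fib P.YY :=
  hWM.fibrant_of_fib (hWM.fib_of_isPullback P.isPullback hV hWM.fibClass.terminal_fibrant hV) hV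

theorem fibrant_Pth {V : C} (hV : Fibrant Fib V) (P : RelStrongPath Cof Fib (terminal.from V)) :
    Fibrant Fib P.Pth :=
  hWM.fibrant_of_fib P.π_fib (hWM.fibrant_YY hV P)

theorem cofibrant_BB {U : C} (hU : Cofibrant Cof U)
    (I : RelStrongCylinder Cof Fib (initial.to U)) : Cofibrant Cof I.BB :=
  hWM.cofibrant_of_cof
    (hWM.cof_of_isPushout I.isPushout hU hWM.cofClass.initial_cofibrant hU) hU

theorem cofibrant_Cyl {U : C} (hU : Cofibrant Cof U)
    (I : RelStrongCylinder Cof Fib (initial.to U)) : Cofibrant Cof I.Cyl :=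
  hWM.cofibrant_of_cof I.ι_cof (hWM.cofibrant_BB hU I)

end IsWeakModel

omit [HasInitial C] [HasTerminal C] in
theorem eqvGen_map {α β : Type*} {r : α → α → Prop} {s : β → β → Prop} (f : α → β)
    (hf : ∀ x y, r x y → s (f x) (f y)) {a b : α} (h : Relation.EqvGen r a b) :
    Relation.EqvGen s (f a) (f b) := by
  induction h with
  | rel x y hxy => exact .rel _ _ (hf x y hxy)
  | refl x => exact .refl _
  | symm x y _ ih => exact .symm _ _ ih
  | trans x y z _ _ ih₁ ih₂ => exact .trans _ _ _ ih₁ ih₂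

variable (Cof Fib) in
def RightHomotopic {S V : C} (g h : S ⟶ V) : Prop :=
  ∃ (P : RelStrongPath Cof Fib (terminal.from V)) (K : S ⟶ P.Pth),
    K ≫ P.π ≫ P.pr₀ = g ∧ K ≫ P.π ≫ P.pr₁ = h

variable (Cof Fib) in
def LeftHomotopic {S V : C} (g h : S ⟶ V) : Prop :=
  ∃ (I : RelStrongCylinder Cof Fib (initial.to S)) (H : I.Cyl ⟶ V),
    I.in₀ ≫ I.ι ≫ H = g ∧ I.in₁ ≫ I.ι ≫ H = h

variable (Cof Fib) in
def Homotopic {S V : C} : (S ⟶ V) → (S ⟶ V) → Prop :=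
  Relation.EqvGen (RightHomotopic Cof Fib)

theorem RightHomotopic.precomp {S' S V : C} (e : S' ⟶ S) {g h : S ⟶ V}
    (H : RightHomotopic Cof Fib g h) : RightHomotopic Cof Fib (e ≫ g) (e ≫ h) := by
  obtain ⟨P, K, rfl, rfl⟩ := H
  exact ⟨P, e ≫ K, by simp, by simp⟩

theorem LeftHomotopic.postcomp {S V W : C} (k : V ⟶ W) {g h : S ⟶ V}
    (H : LeftHomotopic Cof Fib g h) : LeftHomotopic Cof Fib (g ≫ k) (h ≫ k) := by
  obtain ⟨I, H, rfl, rfl⟩ := H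
  exact ⟨I, H ≫ k, by simp, by simp⟩

theorem RightHomotopic.exists_extension {A B V : C} {i : A ⟶ B} (hi : Cof i)
    (hA : Cofibrant Cof A) (hB : Cofibrant Cof B) {u v : A ⟶ V}
    (H : RightHomotopic Cof Fib u v) {t : B ⟶ V} (ht : i ≫ t = u) :
    ∃ t' : B ⟶ V, i ≫ t' = v := by
  obtain ⟨P, K, rfl, rfl⟩ := H
  obtain ⟨M, hM, -⟩ :=
    exists_lift_of_hasLiftingProperty (P.π_pr₀_acyclic.2 i hi hA hB) ht.symm
  exact ⟨M ≫ P.π ≫ P.pr₁, by rw [reassoc_of% hM]⟩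

theorem Homotopic.precomp {S' S V : C} (e : S' ⟶ S) {g h : S ⟶ V}
    (H : Homotopic Cof Fib g h) : Homotopic Cof Fib (e ≫ g) (e ≫ h) :=
  eqvGen_map (e ≫ ·) (fun _ _ H => H.precomp e) H

namespace IsWeakModel

variable (hWM : IsWeakModel Cof Fib)
include hWM

theorem rightHomotopic_of_isAcyclicCof_comp_eq {Z Z' V : C} {j : Z ⟶ Z'}
    (hj : IsAcyclicCof Cof Fib j) (hV : Bifibrant Cof Fib V) {g h : Z' ⟶ V}
    (e : j ≫ g = j ≫ h) : RightHomotopic Cof Fib g h := by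
  obtain ⟨P⟩ := hWM.exists_relStrongPath hV
  obtain ⟨L, -, hL⟩ := exists_lift_of_hasLiftingProperty
    (hj.2 P.π P.π_fib (hWM.fibrant_Pth hV.2 P) (hWM.fibrant_YY hV.2 P))
    (f := j ≫ g ≫ P.σ) (g := P.isPullback.lift g h (terminal.hom_ext _ _))
    (P.isPullback.hom_ext (by simp [P.fac₀]) (by simp [P.fac₁, e]))
  exact ⟨P, L, by simp [reassoc_of% hL], by simp [reassoc_of% hL]⟩

theorem leftHomotopic_of_comp_isAcyclicFib_eq {S Q T : C} {s : Q ⟶ T}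
    (hs : IsAcyclicFib Cof Fib s) (hS : Bifibrant Cof Fib S) {g h : S ⟶ Q}
    (e : g ≫ s = h ≫ s) : LeftHomotopic Cof Fib g h := by
  obtain ⟨I⟩ := hWM.exists_relStrongCylinder hS
  obtain ⟨L, hL, -⟩ := exists_lift_of_hasLiftingProperty
    (hs.2 I.ι I.ι_cof (hWM.cofibrant_BB hS.1 I) (hWM.cofibrant_Cyl hS.1 I))
    (f := I.isPushout.desc g h (initial.hom_ext _ _)) (g := I.ρ ≫ g ≫ s)
    (I.isPushout.hom_ext (by simp [reassoc_of% I.fac₀]) (by simp [reassoc_of% I.fac₁, e]))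
  exact ⟨I, L, by simp [hL], by simp [hL]⟩

-- The homotopy `H` is compared with the constant homotopy `ρ ≫ g` on the cylinder,
-- which agrees with it on the acyclic cofibration `in₀ ≫ ι`.
theorem rightHomotopic_of_leftHomotopic {S V : C} (hV : Bifibrant Cof Fib V) {g h : S ⟶ V}
    (H : LeftHomotopic Cof Fib g h) : RightHomotopic Cof Fib g h ∧ RightHomotopic Cof Fib h g := by
  obtain ⟨I, H, rfl, rfl⟩ := H
  have e : (I.in₀ ≫ I.ι) ≫ I.ρ ≫ I.in₀ ≫ I.ι ≫ H = (I.in₀ ≫ I.ι) ≫ H := by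
    simp [reassoc_of% I.fac₀]
  have H₁ := hWM.rightHomotopic_of_isAcyclicCof_comp_eq I.in₀_ι_acyclic hV e
  have H₂ := hWM.rightHomotopic_of_isAcyclicCof_comp_eq I.in₀_ι_acyclic hV e.symm
  constructor
  · simpa [reassoc_of% I.fac₁] using H₁.precomp (I.in₁ ≫ I.ι)
  · simpa [reassoc_of% I.fac₁] using H₂.precomp (I.in₁ ≫ I.ι)

theorem leftHomotopic_of_rightHomotopic {S V : C} (hS : Bifibrant Cof Fib S) {g h : S ⟶ V}
    (H : RightHomotopic Cof Fib g h) : LeftHomotopic Cof Fib g h := by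
  obtain ⟨P, K, rfl, rfl⟩ := H
  have e : (K ≫ P.π ≫ P.pr₀ ≫ P.σ) ≫ P.π ≫ P.pr₀ = K ≫ P.π ≫ P.pr₀ := by simp [P.fac₀]
  simpa [P.fac₁] using
    (hWM.leftHomotopic_of_comp_isAcyclicFib_eq P.π_pr₀_acyclic hS e).postcomp (P.π ≫ P.pr₁)

theorem rightHomotopic_symm {S V : C} (hS : Bifibrant Cof Fib S) (hV : Bifibrant Cof Fib V)
    {g h : S ⟶ V} (H : RightHomotopic Cof Fib g h) : RightHomotopic Cof Fib h g :=
  (hWM.rightHomotopic_of_leftHomotopic hV (hWM.leftHomotopic_of_rightHomotopic hS H)).2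

theorem homotopic_postcomp {S V W : C} (hS : Bifibrant Cof Fib S) (hW : Bifibrant Cof Fib W)
    (k : V ⟶ W) {g h : S ⟶ V} (H : Homotopic Cof Fib g h) :
    Homotopic Cof Fib (g ≫ k) (h ≫ k) :=
  eqvGen_map (· ≫ k) (fun _ _ H =>
    (hWM.rightHomotopic_of_leftHomotopic hW
      ((hWM.leftHomotopic_of_rightHomotopic hS H).postcomp k)).1) H

theorem homotopic_of_isAcyclicCof_comp_eq {Z Z' V : C} {j : Z ⟶ Z'}
    (hj : IsAcyclicCof Cof Fib j) (hV : Bifibrant Cof Fib V) {g h : Z' ⟶ V}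
    (e : j ≫ g = j ≫ h) : Homotopic Cof Fib g h :=
  .rel _ _ (hWM.rightHomotopic_of_isAcyclicCof_comp_eq hj hV e)

theorem homotopic_of_comp_isAcyclicFib_eq {S Q T : C} {s : Q ⟶ T}
    (hs : IsAcyclicFib Cof Fib s) (hS : Bifibrant Cof Fib S) (hQ : Bifibrant Cof Fib Q)
    {g h : S ⟶ Q} (e : g ≫ s = h ≫ s) : Homotopic Cof Fib g h :=
  .rel _ _ (hWM.rightHomotopic_of_leftHomotopic hQ
    (hWM.leftHomotopic_of_comp_isAcyclicFib_eq hs hS e)).1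

theorem exists_extension_of_homotopic {A B V : C} {i : A ⟶ B} (hi : Cof i)
    (hA : Bifibrant Cof Fib A) (hB : Cofibrant Cof B) (hV : Bifibrant Cof Fib V)
    {u v : A ⟶ V} (H : Homotopic Cof Fib u v) (hv : ∃ t : B ⟶ V, i ≫ t = v) :
    ∃ t : B ⟶ V, i ≫ t = u := by
  suffices ∀ u v : A ⟶ V, Homotopic Cof Fib u v →
      ((∃ t : B ⟶ V, i ≫ t = u) ↔ ∃ t : B ⟶ V, i ≫ t = v) from (this u v H).2 hv
  intro u v H
  induction H with
  | rel u v H =>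
    exact ⟨fun ⟨_, ht⟩ => H.exists_extension hi hA.1 hB ht,
      fun ⟨_, ht⟩ => (hWM.rightHomotopic_symm hA hV H).exists_extension hi hA.1 hB ht⟩
  | refl => exact Iff.rfl
  | symm _ _ _ ih => exact ih.symm
  | trans _ _ _ _ _ ih₁ ih₂ => exact ih₁.trans ih₂

end IsWeakModel

variable (Cof Fib) in
abbrev BifibrantObj : Type u :=
  ObjectProperty.FullSubcategory (Bifibrant Cof Fib)

variable (Cof Fib) in
def homotopicRel : HomRel (BifibrantObj Cof Fib) :=
  fun _ _ f g => Homotopic Cof Fib f.hom g.hom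

variable (Cof Fib) in
abbrev Ho : Type u :=
  CategoryTheory.Quotient (homotopicRel Cof Fib)

theorem IsWeakModel.congruence_homotopicRel (hWM : IsWeakModel Cof Fib) :
    Congruence (homotopicRel Cof Fib) where
  equivalence := ⟨fun _ => .refl _, fun H => .symm _ _ H, fun H₁ H₂ => .trans _ _ _ H₁ H₂⟩
  comp_left f _ _ H := H.precomp f.hom
  comp_right {X _ Z} _ _ g H := hWM.homotopic_postcomp X.property Z.property g.hom H

def hoMap {X Y : C} (hX : Bifibrant Cof Fib X) (hY : Bifibrant Cof Fib Y) (f : X ⟶ Y) :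
    (⟨⟨X, hX⟩⟩ : Ho Cof Fib) ⟶ ⟨⟨Y, hY⟩⟩ :=
  (Quotient.functor _).map (ObjectProperty.homMk f)

theorem hoMap_id {X : C} (hX : Bifibrant Cof Fib X) : hoMap hX hX (𝟙 X) = 𝟙 _ :=
  (Quotient.functor _).map_id _

theorem hoMap_comp {X Y Z : C} (hX : Bifibrant Cof Fib X) (hY : Bifibrant Cof Fib Y)
    (hZ : Bifibrant Cof Fib Z) (f : X ⟶ Y) (g : Y ⟶ Z) :
    hoMap hX hZ (f ≫ g) = hoMap hX hY f ≫ hoMap hY hZ g :=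
  by rw [hoMap, hoMap, hoMap, ← Functor.map_comp]; rfl

theorem hoMap_eq_of_homotopic {X Y : C} (hX : Bifibrant Cof Fib X) (hY : Bifibrant Cof Fib Y)
    {f g : X ⟶ Y} (H : Homotopic Cof Fib f g) : hoMap hX hY f = hoMap hX hY g :=
  CategoryTheory.Quotient.sound _ H

theorem hoMap_surjective {X Y : C} (hX : Bifibrant Cof Fib X) (hY : Bifibrant Cof Fib Y)
    (φ : (⟨⟨X, hX⟩⟩ : Ho Cof Fib) ⟶ ⟨⟨Y, hY⟩⟩) : ∃ f : X ⟶ Y, hoMap hX hY f = φ := by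
  obtain ⟨f, rfl⟩ := (Quotient.functor (homotopicRel Cof Fib)).map_surjective φ
  exact ⟨f.hom, rfl⟩

namespace IsWeakModel

variable (hWM : IsWeakModel Cof Fib)
include hWM

theorem homotopic_of_hoMap_eq {X Y : C} {hX : Bifibrant Cof Fib X} {hY : Bifibrant Cof Fib Y}
    {f g : X ⟶ Y} (e : hoMap hX hY f = hoMap hX hY g) : Homotopic Cof Fib f g :=
  (@Quotient.functor_map_eq_iff _ _ _ hWM.congruence_homotopicRel _ _ _ _).1 e

theorem isIso_hoMap_of_isAcyclicCof_fac {Z R R' : C} (hR : Bifibrant Cof Fib R)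
    (hR' : Bifibrant Cof Fib R') {r : Z ⟶ R} {r' : Z ⟶ R'} (hr : IsAcyclicCof Cof Fib r)
    (hr' : IsAcyclicCof Cof Fib r') {ψ : R ⟶ R'} (e : r ≫ ψ = r') :
    IsIso (hoMap hR hR' ψ) := by
  obtain ⟨ξ, hξ⟩ := hWM.exists_extension_of_isAcyclicCof hr' hR.2 r
  refine ⟨hoMap hR' hR ξ, ?_, ?_⟩
  · rw [← hoMap_comp, ← hoMap_id]
    exact hoMap_eq_of_homotopic _ _
      (hWM.homotopic_of_isAcyclicCof_comp_eq hr hR (by simp [reassoc_of% e, hξ]))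
  · rw [← hoMap_comp, ← hoMap_id]
    exact hoMap_eq_of_homotopic _ _
      (hWM.homotopic_of_isAcyclicCof_comp_eq hr' hR' (by simp [reassoc_of% hξ, e]))

theorem isIso_hoMap_of_isAcyclicFib_fac {Z R R' : C} (hR : Bifibrant Cof Fib R)
    (hR' : Bifibrant Cof Fib R') {s : R ⟶ Z} {s' : R' ⟶ Z} (hs : IsAcyclicFib Cof Fib s)
    (hs' : IsAcyclicFib Cof Fib s') {ψ : R ⟶ R'} (e : ψ ≫ s' = s) :
    IsIso (hoMap hR hR' ψ) := by
  obtain ⟨ξ, hξ⟩ := hWM.exists_lift_of_isAcyclicFib hs hR'.1 s'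
  refine ⟨hoMap hR' hR ξ, ?_, ?_⟩
  · rw [← hoMap_comp, ← hoMap_id]
    exact hoMap_eq_of_homotopic _ _
      (hWM.homotopic_of_comp_isAcyclicFib_eq hs hR hR (by simp [hξ, e]))
  · rw [← hoMap_comp, ← hoMap_id]
    exact hoMap_eq_of_homotopic _ _
      (hWM.homotopic_of_comp_isAcyclicFib_eq hs' hR' hR' (by simp [e, hξ]))

theorem isIso_hoMap_of_isAcyclicCof {X Y : C} (hX : Bifibrant Cof Fib X)
    (hY : Bifibrant Cof Fib Y) {f : X ⟶ Y} (hf : IsAcyclicCof Cof Fib f) :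
    IsIso (hoMap hX hY f) :=
  hWM.isIso_hoMap_of_isAcyclicCof_fac hX hY (hWM.isAcyclicCof_id hX.1) hf (Category.id_comp f)

theorem isIso_hoMap_of_isAcyclicFib {X Y : C} (hX : Bifibrant Cof Fib X)
    (hY : Bifibrant Cof Fib Y) {f : X ⟶ Y} (hf : IsAcyclicFib Cof Fib f) :
    IsIso (hoMap hX hY f) :=
  hWM.isIso_hoMap_of_isAcyclicFib_fac hX hY hf (hWM.isAcyclicFib_id hY.2) (Category.comp_id f)

end IsWeakModel

-- A link from `Z` to a bifibrant replacement `R`. Fibrant objects only get links `R ⟶ Z`, so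
-- that a map between bifibrant objects can be compared with its replacement.
variable (Cof Fib) in
inductive Link (Z R : C) : Type v
  | fwd (r : Z ⟶ R) (hr : IsAcyclicCof Cof Fib r) (hZ : Cofibrant Cof Z) (hZ' : ¬ Fibrant Fib Z)
  | bwd (s : R ⟶ Z) (hs : IsAcyclicFib Cof Fib s) (hZ : Fibrant Fib Z)

namespace Link

def Over {Z R T : C} : Link Cof Fib Z R → (T ⟶ R) → (T ⟶ Z) → Prop
  | .fwd r .., x, a => a ≫ r = x
  | .bwd s .., x, a => x ≫ s = a

theorem Over.precomp {Z R T T' : C} {l : Link Cof Fib Z R} {x : T ⟶ R} {a : T ⟶ Z}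
    (h : l.Over x a) (e : T' ⟶ T) : l.Over (e ≫ x) (e ≫ a) := by
  cases l <;> exact (Category.assoc _ _ _).trans (e ≫= h)

-- `ψ` covers `φ`: in each of the four cases this is the commutativity of the square formed by
-- `φ`, `ψ` and the two links; phrased through `Over` it is visibly stable under composition.
def Compatible {Z R Z₁ R₁ : C} (l : Link Cof Fib Z R) (l₁ : Link Cof Fib Z₁ R₁) (φ : Z ⟶ Z₁)
    (ψ : R ⟶ R₁) : Prop :=
  ∀ ⦃T : C⦄ (x : T ⟶ R) (a : T ⟶ Z), l.Over x a → l₁.Over (x ≫ ψ) (a ≫ φ)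

theorem compatible_id {Z R : C} (l : Link Cof Fib Z R) : l.Compatible l (𝟙 Z) (𝟙 R) :=
  fun _ _ _ h => by simpa using h

theorem Compatible.comp {Z R Z₁ R₁ Z₂ R₂ : C} {l : Link Cof Fib Z R} {l₁ : Link Cof Fib Z₁ R₁}
    {l₂ : Link Cof Fib Z₂ R₂} {φ : Z ⟶ Z₁} {φ' : Z₁ ⟶ Z₂} {ψ : R ⟶ R₁} {ψ' : R₁ ⟶ R₂}
    (h : l.Compatible l₁ φ ψ) (h' : l₁.Compatible l₂ φ' ψ') :
    l.Compatible l₂ (φ ≫ φ') (ψ ≫ ψ') :=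
  fun _ x a hxa => by simpa using h' _ _ (h x a hxa)

theorem compatible_fwd_iff {Z R Z₁ R₁ : C} {r : Z ⟶ R} {hr : IsAcyclicCof Cof Fib r}
    {hZ : Cofibrant Cof Z} {hZ' : ¬ Fibrant Fib Z} {l₁ : Link Cof Fib Z₁ R₁} {φ : Z ⟶ Z₁}
    {ψ : R ⟶ R₁} : (fwd r hr hZ hZ').Compatible l₁ φ ψ ↔ l₁.Over (r ≫ ψ) φ := by
  refine ⟨fun h => by simpa using h r (𝟙 Z) (Category.id_comp r), ?_⟩
  rintro h _ x a (rfl : a ≫ r = x)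
  simpa using h.precomp a

theorem compatible_bwd_iff {Z R Z₁ R₁ : C} {s : R ⟶ Z} {hs : IsAcyclicFib Cof Fib s}
    {hZ : Fibrant Fib Z} {l₁ : Link Cof Fib Z₁ R₁} {φ : Z ⟶ Z₁} {ψ : R ⟶ R₁} :
    (bwd s hs hZ).Compatible l₁ φ ψ ↔ l₁.Over ψ (s ≫ φ) := by
  refine ⟨fun h => by simpa using h (𝟙 R) s (Category.id_comp s), ?_⟩
  rintro h _ x a (rfl : x ≫ s = a)
  simpa using h.precomp x

end Link

variable (Cof Fib) in
structure Replacement (Z : C) where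
  obj : C
  bifibrant : Bifibrant Cof Fib obj
  link : Link Cof Fib Z obj

namespace IsWeakModel

variable (hWM : IsWeakModel Cof Fib)
include hWM

theorem exists_compatible {Z R Z₁ R₁ : C} (hR : Bifibrant Cof Fib R)
    (hR₁ : Bifibrant Cof Fib R₁) (l : Link Cof Fib Z R) (l₁ : Link Cof Fib Z₁ R₁) (φ : Z ⟶ Z₁) :
    ∃ ψ : R ⟶ R₁, l.Compatible l₁ φ ψ := by
  cases l with
  | fwd r hr hZ =>
    simp only [Link.compatible_fwd_iff]
    cases l₁ with
    | fwd r₁ =>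
      exact (hWM.exists_extension_of_isAcyclicCof hr hR₁.2 (φ ≫ r₁)).imp fun _ h => h.symm
    | bwd s₁ hs₁ =>
      obtain ⟨κ, hκ⟩ := hWM.exists_lift_of_isAcyclicFib hs₁ hZ φ
      obtain ⟨ψ, hψ⟩ := hWM.exists_extension_of_isAcyclicCof hr hR₁.2 κ
      exact ⟨ψ, show (r ≫ ψ) ≫ s₁ = φ by rw [hψ, hκ]⟩
  | bwd s hs =>
    simp only [Link.compatible_bwd_iff]
    cases l₁ with
    | fwd r₁ => exact ⟨s ≫ φ ≫ r₁, Category.assoc _ _ _⟩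
    | bwd s₁ hs₁ => exact hWM.exists_lift_of_isAcyclicFib hs₁ hR.1 (s ≫ φ)

theorem hoMap_eq_of_compatible {Z R Z₁ R₁ : C} (hR : Bifibrant Cof Fib R)
    (hR₁ : Bifibrant Cof Fib R₁) {l : Link Cof Fib Z R} {l₁ : Link Cof Fib Z₁ R₁} {φ : Z ⟶ Z₁}
    {ψ ψ' : R ⟶ R₁} (h : l.Compatible l₁ φ ψ) (h' : l.Compatible l₁ φ ψ') :
    hoMap hR hR₁ ψ = hoMap hR hR₁ ψ' := by
  apply hoMap_eq_of_homotopic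
  cases l <;> cases l₁ <;> simp only [Link.compatible_fwd_iff, Link.compatible_bwd_iff,
    Link.Over] at h h'
  case fwd.fwd r hr _ _ r₁ _ _ _ =>
    exact hWM.homotopic_of_isAcyclicCof_comp_eq hr hR₁ (h.symm.trans h')
  case fwd.bwd r hr _ _ s₁ hs₁ hZ₁ =>
    -- a lift in the square formed by `r` and `s₁` is homotopic to both `ψ` and `ψ'`
    obtain ⟨χ, hχ, hχ'⟩ := exists_lift_of_hasLiftingProperty (hr.2 s₁ hs₁.1 hR₁.2 hZ₁)
      (f := r ≫ ψ') (g := ψ ≫ s₁) (by rw [h', ← h, Category.assoc])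
    exact .trans _ _ _ (hWM.homotopic_of_comp_isAcyclicFib_eq hs₁ hR hR₁ hχ'.symm)
      (hWM.homotopic_of_isAcyclicCof_comp_eq hr hR₁ hχ)
  case bwd.fwd =>
    rw [← h, ← h']
    exact .refl _
  case bwd.bwd s₁ hs₁ _ =>
    exact hWM.homotopic_of_comp_isAcyclicFib_eq hs₁ hR hR₁ (h.trans h'.symm)

theorem isIso_hoMap_of_compatible_of_isAcyclicCof {Z R Z₁ R₁ : C} (hR : Bifibrant Cof Fib R)
    (hR₁ : Bifibrant Cof Fib R₁) {l : Link Cof Fib Z R} {l₁ : Link Cof Fib Z₁ R₁} {φ : Z ⟶ Z₁}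
    {ψ : R ⟶ R₁} (hφ : IsAcyclicCof Cof Fib φ) (hZ : Cofibrant Cof Z)
    (h : l.Compatible l₁ φ ψ) : IsIso (hoMap hR hR₁ ψ) := by
  have hZ₁ := hWM.cofibrant_of_cof hφ.1 hZ
  cases l <;> cases l₁ <;> simp only [Link.compatible_fwd_iff, Link.compatible_bwd_iff,
    Link.Over] at h
  case fwd.fwd r hr _ _ r₁ hr₁ _ _ =>
    exact hWM.isIso_hoMap_of_isAcyclicCof_fac hR hR₁ hr (hWM.isAcyclicCof_comp hφ hr₁) h.symm
  case fwd.bwd r hr _ _ s₁ hs₁ hZ₁' =>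
    have hZ₁ : Bifibrant Cof Fib Z₁ := ⟨hZ₁, hZ₁'⟩
    have := hWM.isIso_hoMap_of_isAcyclicFib hR₁ hZ₁ hs₁
    have : IsIso (hoMap hR hR₁ ψ ≫ hoMap hR₁ hZ₁ s₁) := by
      rw [← hoMap_comp]
      exact hWM.isIso_hoMap_of_isAcyclicCof_fac hR hZ₁ hr hφ (by rw [← h, Category.assoc])
    exact IsIso.of_isIso_comp_right _ (hoMap hR₁ hZ₁ s₁)
  case bwd.fwd s hs hZ' r₁ hr₁ _ _ =>
    have hZ : Bifibrant Cof Fib Z := ⟨hZ, hZ'⟩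
    have := hWM.isIso_hoMap_of_isAcyclicFib hR hZ hs
    have := hWM.isIso_hoMap_of_isAcyclicCof hZ hR₁ (hWM.isAcyclicCof_comp hφ hr₁)
    rw [← h, Category.assoc, hoMap_comp hR hZ hR₁]
    infer_instance
  case bwd.bwd s hs hZ' s₁ hs₁ hZ₁' =>
    have hZ : Bifibrant Cof Fib Z := ⟨hZ, hZ'⟩
    have hZ₁ : Bifibrant Cof Fib Z₁ := ⟨hZ₁, hZ₁'⟩
    have := hWM.isIso_hoMap_of_isAcyclicFib hR hZ hs
    have := hWM.isIso_hoMap_of_isAcyclicCof hZ hZ₁ hφ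
    have := hWM.isIso_hoMap_of_isAcyclicFib hR₁ hZ₁ hs₁
    have : IsIso (hoMap hR hR₁ ψ ≫ hoMap hR₁ hZ₁ s₁) := by
      rw [← hoMap_comp, h, hoMap_comp hR hZ hZ₁]
      infer_instance
    exact IsIso.of_isIso_comp_right _ (hoMap hR₁ hZ₁ s₁)

theorem isIso_hoMap_of_compatible_of_isAcyclicFib {Z R Z₁ R₁ : C} (hR : Bifibrant Cof Fib R)
    (hR₁ : Bifibrant Cof Fib R₁) {l : Link Cof Fib Z R} {l₁ : Link Cof Fib Z₁ R₁} {φ : Z ⟶ Z₁}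
    {ψ : R ⟶ R₁} (hφ : IsAcyclicFib Cof Fib φ) (hZ₁ : Fibrant Fib Z₁)
    (h : l.Compatible l₁ φ ψ) : IsIso (hoMap hR hR₁ ψ) := by
  cases l with
  | fwd _ _ _ hZ => exact absurd (hWM.fibrant_of_fib hφ.1 hZ₁) hZ
  | bwd s hs =>
    cases l₁ with
    | fwd _ _ _ hZ₁' => exact absurd hZ₁ hZ₁'
    | bwd s₁ hs₁ =>
      simp only [Link.compatible_bwd_iff, Link.Over] at h
      exact hWM.isIso_hoMap_of_isAcyclicFib_fac hR hR₁ (hWM.isAcyclicFib_comp hs hφ) hs₁ h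

theorem isIso_hoMap_of_compatible_of_isIso {Z R Z₁ R₁ : C} (hZ : Bifibrant Cof Fib Z)
    (hR : Bifibrant Cof Fib R) (hZ₁ : Bifibrant Cof Fib Z₁) (hR₁ : Bifibrant Cof Fib R₁)
    {l : Link Cof Fib Z R} {l₁ : Link Cof Fib Z₁ R₁} {φ : Z ⟶ Z₁} {ψ : R ⟶ R₁}
    (h : l.Compatible l₁ φ ψ) [IsIso (hoMap hR hR₁ ψ)] : IsIso (hoMap hZ hZ₁ φ) := by
  cases l with
  | fwd _ _ _ hZ' => exact absurd hZ.2 hZ'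
  | bwd s hs =>
    cases l₁ with
    | fwd _ _ _ hZ₁' => exact absurd hZ₁.2 hZ₁'
    | bwd s₁ hs₁ =>
      simp only [Link.compatible_bwd_iff, Link.Over] at h
      have := hWM.isIso_hoMap_of_isAcyclicFib hR hZ hs
      have := hWM.isIso_hoMap_of_isAcyclicFib hR₁ hZ₁ hs₁
      have : IsIso (hoMap hR hZ s ≫ hoMap hZ hZ₁ φ) := by
        rw [← hoMap_comp, ← h, hoMap_comp hR hR₁ hZ₁]
        infer_instance
      exact IsIso.of_isIso_comp_left (hoMap hR hZ s) _

theorem nonempty_replacement {Z : C} (hZ : Cofibrant Cof Z ∨ Fibrant Fib Z) :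
    Nonempty (Replacement Cof Fib Z) := by
  by_cases hZ' : Fibrant Fib Z
  · obtain ⟨R, i, s, hi, hs, -⟩ :=
      hWM.factor_cof_afib (initial.to Z) hWM.cofClass.initial_cofibrant hZ'
    exact ⟨⟨R, ⟨hWM.cofibrant_of_cof hi hWM.cofClass.initial_cofibrant,
      hWM.fibrant_of_fib hs.1 hZ'⟩, .bwd s hs hZ'⟩⟩
  · have hZ := hZ.resolve_right hZ'
    obtain ⟨R, r, p, hr, hp, -⟩ :=
      hWM.factor_acof_fib (terminal.from Z) hZ hWM.fibClass.terminal_fibrant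
    exact ⟨⟨R, ⟨hWM.cofibrant_of_cof hr.1 hZ, hWM.fibrant_of_fib hp hWM.fibClass.terminal_fibrant⟩,
      .fwd r hr hZ hZ'⟩⟩

noncomputable def replacement (Z : Ccf Cof Fib) : Replacement Cof Fib Z.obj :=
  Classical.choice (hWM.nonempty_replacement Z.property)

noncomputable def replacementMap {Z Z₁ : Ccf Cof Fib} (φ : Z ⟶ Z₁) :
    (hWM.replacement Z).obj ⟶ (hWM.replacement Z₁).obj :=
  (hWM.exists_compatible (hWM.replacement Z).bifibrant (hWM.replacement Z₁).bifibrant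
    (hWM.replacement Z).link (hWM.replacement Z₁).link φ.hom).choose

theorem compatible_replacementMap {Z Z₁ : Ccf Cof Fib} (φ : Z ⟶ Z₁) :
    (hWM.replacement Z).link.Compatible (hWM.replacement Z₁).link φ.hom (hWM.replacementMap φ) :=
  (hWM.exists_compatible (hWM.replacement Z).bifibrant (hWM.replacement Z₁).bifibrant
    (hWM.replacement Z).link (hWM.replacement Z₁).link φ.hom).choose_spec

noncomputable def toHo : Ccf Cof Fib ⥤ Ho Cof Fib where
  obj Z := ⟨⟨_, (hWM.replacement Z).bifibrant⟩⟩
  map φ := hoMap _ _ (hWM.replacementMap φ)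
  map_id Z := (hWM.hoMap_eq_of_compatible _ _ (hWM.compatible_replacementMap (𝟙 Z))
    (Link.compatible_id _)).trans (hoMap_id _)
  map_comp φ φ' := (hWM.hoMap_eq_of_compatible _ _ (hWM.compatible_replacementMap (φ ≫ φ'))
    ((hWM.compatible_replacementMap φ).comp (hWM.compatible_replacementMap φ'))).trans
    (hoMap_comp _ _ _ _ _)

theorem toHo_inverts : (WcfProp Cof Fib).IsInvertedBy hWM.toHo :=
  fun _ _ φ hφ => hφ.elim
    (fun ⟨hφ, hZ⟩ => hWM.isIso_hoMap_of_compatible_of_isAcyclicCof _ _ hφ hZ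
      (hWM.compatible_replacementMap φ))
    (fun ⟨hφ, hZ₁⟩ => hWM.isIso_hoMap_of_compatible_of_isAcyclicFib _ _ hφ hZ₁
      (hWM.compatible_replacementMap φ))

theorem isIso_hoMap_of_isEquivCcf {X Y : C} (hX : Bifibrant Cof Fib X) (hY : Bifibrant Cof Fib Y)
    {f : X ⟶ Y} (hf : IsEquivCcf Cof Fib (homCcf Cof Fib (Or.inl hX.1) (Or.inl hY.1) f)) :
    IsIso (hoMap hX hY f) := by
  set φ := homCcf Cof Fib (Or.inl hX.1) (Or.inl hY.1) f
  have : IsIso ((WcfProp Cof Fib).Q.map φ) := hf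
  have : IsIso (hWM.toHo.map φ) := by
    rw [← Localization.Construction.fac hWM.toHo hWM.toHo_inverts, Functor.comp_map]
    infer_instance
  have : IsIso (hoMap _ _ (hWM.replacementMap φ)) := this
  exact hWM.isIso_hoMap_of_compatible_of_isIso hX _ hY _ (hWM.compatible_replacementMap φ)

theorem exists_retraction_of_isEquivCcf {X Y : C} {j : X ⟶ Y} (hj : Cof j)
    (hX : Bifibrant Cof Fib X) (hY : Bifibrant Cof Fib Y)
    (he : IsEquivCcf Cof Fib (homCcf Cof Fib (Or.inl hX.1) (Or.inl hY.1) j)) :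
    ∃ r : Y ⟶ X, j ≫ r = 𝟙 X := by
  have := hWM.isIso_hoMap_of_isEquivCcf hX hY he
  obtain ⟨g, hg⟩ := hoMap_surjective hY hX (inv (hoMap hX hY j))
  have H : Homotopic Cof Fib (j ≫ g) (𝟙 X) :=
    hWM.homotopic_of_hoMap_eq (by rw [hoMap_comp hX hY hX, hg, IsIso.hom_inv_id, hoMap_id])
  exact hWM.exists_extension_of_homotopic hj hX hY.1 hX (.symm _ _ H) ⟨g, rfl⟩

end IsWeakModel

theorem isEquivCcf_of_fac {Z₁ Z₂ Z₃ Z₄ : Ccf Cof Fib} {j : Z₁ ⟶ Z₂} {q : Z₂ ⟶ Z₄}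
    {p : Z₁ ⟶ Z₃} {f : Z₃ ⟶ Z₄} (e : j ≫ q = p ≫ f) (hp : WcfProp Cof Fib p)
    (hq : WcfProp Cof Fib q) (hf : IsEquivCcf Cof Fib f) : IsEquivCcf Cof Fib j := by
  have : IsIso ((WcfProp Cof Fib).Q.map f) := hf
  have := Localization.inverts (WcfProp Cof Fib).Q (WcfProp Cof Fib) p hp
  have := Localization.inverts (WcfProp Cof Fib).Q (WcfProp Cof Fib) q hq
  have : IsIso ((WcfProp Cof Fib).Q.map j ≫ (WcfProp Cof Fib).Q.map q) := by
    rw [← Functor.map_comp, e, Functor.map_comp]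
    infer_instance
  exact IsIso.of_isIso_comp_right _ ((WcfProp Cof Fib).Q.map q)

end

theorem statement7_general (Cof Fib : MorphismProperty C) (hWM : IsWeakModel Cof Fib)
    {A B X Y : C} (i : A ⟶ B) (f : X ⟶ Y) (w : A ⟶ X) (b : B ⟶ Y)
    (hi : Cof i) (hA : Cofibrant Cof A)
    (hX : Fibrant Fib X) (hY : Fibrant Fib Y)
    (hf : IsEquivCcf Cof Fib (homCcf Cof Fib (Or.inr hX) (Or.inr hY) f))
    (hsq : w ≫ f = i ≫ b) :
    ∃ t : B ⟶ X, i ≫ t = w := by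
  obtain ⟨X', u, p, hu, hp, rfl⟩ := hWM.factor_cof_afib w hA hX
  have hX' : Bifibrant Cof Fib X' := ⟨hWM.cofibrant_of_cof hu hA, hWM.fibrant_of_fib hp.1 hX⟩
  obtain ⟨P, inl, inr, hpo, hinl⟩ := hWM.cofClass.pushout_mem i u hi hA hX'.1
  have hP := hWM.cofibrant_of_cof hinl hX'.1
  obtain ⟨Y', c, q, hc, hq, hcq⟩ :=
    hWM.factor_cof_afib (hpo.desc (p ≫ f) b (by rw [← hsq, Category.assoc])) hP hY
  have hY' : Bifibrant Cof Fib Y' := ⟨hWM.cofibrant_of_cof hc hP, hWM.fibrant_of_fib hq.1 hY⟩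
  have hj : IsEquivCcf Cof Fib (homCcf Cof Fib (Or.inl hX'.1) (Or.inl hY'.1) (inl ≫ c)) :=
    isEquivCcf_of_fac (p := homCcf Cof Fib (Or.inl hX'.1) (Or.inr hX) p)
      (q := homCcf Cof Fib (Or.inl hY'.1) (Or.inr hY) q) (f := homCcf Cof Fib _ _ f)
      (InducedCategory.hom_ext (by simp [homCcf, hcq])) (Or.inr ⟨hp, hX⟩) (Or.inr ⟨hq, hY⟩) hf
  obtain ⟨r, hr⟩ :=
    hWM.exists_retraction_of_isEquivCcf (hWM.cofClass.comp_mem _ _ hinl hc) hX' hY' hj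
  refine ⟨inr ≫ c ≫ r ≫ p, ?_⟩
  rw [← hpo.w_assoc, reassoc_of% hr]

/-- given a commutative square with left leg a cofibration between cofibrant
objects and right leg an equivalence between fibrant objects, there is a diagonal map
making the upper triangle commute. -/
theorem statement7 (Cof Fib : MorphismProperty C) (hWM : IsWeakModel Cof Fib)
    {A B X Y : C} (i : A ⟶ B) (f : X ⟶ Y) (w : A ⟶ X) (b : B ⟶ Y)
    (hi : Cof i) (hA : Cofibrant Cof A) (hB : Cofibrant Cof B)
    (hX : Fibrant Fib X) (hY : Fibrant Fib Y)
    (hf : IsEquivCcf Cof Fib (homCcf Cof Fib (Or.inr hX) (Or.inr hY) f))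
    (hsq : w ≫ f = i ≫ b) :
    ∃ t : B ⟶ X, i ≫ t = w :=
  statement7_general Cof Fib hWM i f w b hi hA hX hY hf hsq

end WMC
end

section
/- Let C be a category equipped with a class of cofibrations and a class of fibrations satisfying the factorization axiom: every morphism from a cofibrant object to a fibrant object factors both as a cofibration followed by an acyclic fibration and as an acyclic cofibration followed by a fibration. Then the following conditions are equivalent: (i) for every bifibrant object A and every factorization of the identity of A as a cofibration A → B followed by an acyclic fibration B → A, the cofibration A → B is an acyclic cofibration; (ii) there is a class F of acyclic fibrations such that every morphism from a cofibrant object to a fibrant object factors as a cofibration followed by a member of F, and condition (i) holds whenever the acyclic fibration part of the factorization lies in F; (iii) every cofibration A → B with A cofibrant and B fibrant admits a relative strong cylinder object; (iv) every cofibration between bifibrant objects admits a relative strong cylinder object. -/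
/-! The substantial implication is (iv) ⇒ (i). Let `i : A ⟶ B` be a cofibration with a
retraction `q` that is an acyclic fibration, and take a strong cylinder `B ⊔_A B ⟶ I ⟶ B`
for `i`. Lifting `ι` against `q` gives a homotopy `H : I ⟶ B` rel `A` from `q ≫ i` to `𝟙 B`,
and the pair `(q, H)` exhibits `i` as a retract, in the arrow category, of the acyclic
cofibration `in₀ ≫ ι`; lifting properties pass to retracts. Conversely, factoring the
codiagonal `B ⊔_A B ⟶ B` as a cofibration followed by a map in `F` gives a strong cylinder
by (ii). -/

open CategoryTheory CategoryTheory.Limits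

universe w v u

namespace WMC

variable {C : Type u} [Category.{v} C] {Cof Fib : MorphismProperty C}

lemma IsCofClass.cofibrant_of_mem [HasInitial C] (hCof : IsCofClass Cof) {A B : C}
    {i : A ⟶ B} (hi : Cof i) (hA : Cofibrant Cof A) : Cofibrant Cof B := by
  have h := hCof.comp_mem _ _ hA hi
  rwa [initial.hom_ext (initial.to A ≫ i) (initial.to B)] at h

lemma IsFibClass.fibrant_of_mem [HasTerminal C] (hFib : IsFibClass Fib) {A B : C}
    {q : B ⟶ A} (hq : Fib q) (hA : Fibrant Fib A) : Fibrant Fib B := by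
  have h := hFib.comp_mem _ _ hq hA
  rwa [terminal.hom_ext (q ≫ terminal.from A) (terminal.from B)] at h

lemma IsCofClass.mem_inl_of_isPushout [HasInitial C] (hCof : IsCofClass Cof)
    {A B X P : C} {i : A ⟶ B} {f : A ⟶ X} {inl : X ⟶ P} {inr : B ⟶ P}
    (hpo : IsPushout f i inl inr) (hi : Cof i) (hA : Cofibrant Cof A)
    (hX : Cofibrant Cof X) : Cof inl := by
  obtain ⟨P', inl', inr', hpo', hinl'⟩ := hCof.pushout_mem i f hi hA hX
  have hP' : Cofibrant Cof P' := hCof.cofibrant_of_mem hinl' hX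
  rw [← hpo'.inl_isoIsPushout_hom _ _ hpo]
  exact hCof.comp_mem _ _ hinl' (hCof.iso_mem _ inferInstance hP')

lemma IsAcyclicCof.of_retractArrow [HasTerminal C] {A B A' B' : C} {i : A ⟶ B}
    {j : A' ⟶ B'} (hi : Cof i) (h : RetractArrow i j) (hj : IsAcyclicCof Cof Fib j) :
    IsAcyclicCof Cof Fib i :=
  ⟨hi, fun p hp hX hY => have := hj.2 p hp hX hY; h.leftLiftingProperty p⟩

variable [HasInitial C] [HasTerminal C]

namespace RelStrongCylinder

variable {A B : C} {i : A ⟶ B}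

def retractArrowOfHomotopy (cyl : RelStrongCylinder Cof Fib i) {r : B ⟶ A}
    (hr : i ≫ r = 𝟙 A) {H : cyl.Cyl ⟶ B}
    (h₀ : cyl.in₀ ≫ cyl.ι ≫ H = r ≫ i) (h₁ : cyl.in₁ ≫ cyl.ι ≫ H = 𝟙 B) :
    RetractArrow i (cyl.in₀ ≫ cyl.ι) where
  i := Arrow.homMk' i (cyl.in₁ ≫ cyl.ι) (by rw [cyl.isPushout.w_assoc])
  r := Arrow.homMk' r H (by rw [Category.assoc, h₀])
  retract := by ext <;> simp [hr, h₁]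

lemma exists_homotopy_of_retraction (cyl : RelStrongCylinder Cof Fib i)
    (hCof : IsCofClass Cof) (hi : Cof i) (hA : Cofibrant Cof A) {q : B ⟶ A}
    (hq : IsAcyclicFib Cof Fib q) (hiq : i ≫ q = 𝟙 A) :
    ∃ H : cyl.Cyl ⟶ B, cyl.in₀ ≫ cyl.ι ≫ H = q ≫ i ∧ cyl.in₁ ≫ cyl.ι ≫ H = 𝟙 B := by
  have hB : Cofibrant Cof B := hCof.cofibrant_of_mem hi hA
  have hBB : Cofibrant Cof cyl.BB :=
    hCof.cofibrant_of_mem (hCof.mem_inl_of_isPushout cyl.isPushout hi hA hB) hB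
  have hCyl : Cofibrant Cof cyl.Cyl := hCof.cofibrant_of_mem cyl.ι_cof hBB
  have := hq.2 cyl.ι cyl.ι_cof hBB hCyl
  let t : cyl.BB ⟶ B := cyl.isPushout.desc (q ≫ i) (𝟙 B) (by rw [reassoc_of% hiq]; simp)
  have sq : CommSq t cyl.ι q (cyl.ρ ≫ q) := ⟨cyl.isPushout.hom_ext
    (by simp [t, reassoc_of% cyl.fac₀, hiq]) (by simp [t, reassoc_of% cyl.fac₁])⟩
  exact ⟨sq.lift, by simp [t], by simp [t]⟩

lemma isAcyclicCof_of_retraction (cyl : RelStrongCylinder Cof Fib i)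
    (hCof : IsCofClass Cof) (hi : Cof i) (hA : Cofibrant Cof A) {q : B ⟶ A}
    (hq : IsAcyclicFib Cof Fib q) (hiq : i ≫ q = 𝟙 A) :
    IsAcyclicCof Cof Fib i :=
  let ⟨_, h₀, h₁⟩ := cyl.exists_homotopy_of_retraction hCof hi hA hq hiq
  IsAcyclicCof.of_retractArrow hi (cyl.retractArrowOfHomotopy hiq h₀ h₁) cyl.in₀_ι_acyclic

end RelStrongCylinder

lemma nonempty_relStrongCylinder_of_factorization (hCof : IsCofClass Cof)
    {F : MorphismProperty C}
    (hFfac : ∀ {X Y : C} (f : X ⟶ Y), Cofibrant Cof X → Fibrant Fib Y →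
      ∃ (Z : C) (i : X ⟶ Z) (q : Z ⟶ Y), Cof i ∧ F q ∧ i ≫ q = f)
    (hFret : ∀ {A B : C} (i : A ⟶ B) (q : B ⟶ A), Cofibrant Cof A → Fibrant Fib A →
      Cof i → F q → i ≫ q = 𝟙 A → IsAcyclicCof Cof Fib i)
    {A B : C} {i : A ⟶ B} (hi : Cof i) (hA : Cofibrant Cof A) (hB : Fibrant Fib B) :
    Nonempty (RelStrongCylinder Cof Fib i) := by
  have hBc : Cofibrant Cof B := hCof.cofibrant_of_mem hi hA
  obtain ⟨P, in₀, in₁, hpo, hin₀⟩ := hCof.pushout_mem i i hi hA hBc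
  obtain ⟨Z, ι, ρ, hι, hρ, hfac⟩ :=
    hFfac (hpo.desc (𝟙 B) (𝟙 B) rfl) (hCof.cofibrant_of_mem hin₀ hBc) hB
  have fac₀ : in₀ ≫ ι ≫ ρ = 𝟙 B := by rw [hfac, hpo.inl_desc]
  exact ⟨⟨P, in₀, in₁, hpo, Z, ι, ρ, hι,
    hFret _ ρ hBc hB (hCof.comp_mem _ _ hin₀ hι) hρ (by rwa [Category.assoc]),
    fac₀, by rw [hfac, hpo.inr_desc]⟩⟩

theorem statement8_general (Cof Fib : MorphismProperty C)
    (hCof : IsCofClass Cof) (hFib : IsFibClass Fib)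
    (hfac₁ : ∀ {X Y : C} (f : X ⟶ Y), Cofibrant Cof X → Fibrant Fib Y →
      ∃ (Z : C) (i : X ⟶ Z) (q : Z ⟶ Y), Cof i ∧ IsAcyclicFib Cof Fib q ∧ i ≫ q = f) :
    List.TFAE [
      -- (i) for any bifibrant `A` and factorization of `𝟙 A` as a cofibration followed
      -- by an acyclic fibration, the cofibration is acyclic
      (∀ {A B : C} (i : A ⟶ B) (q : B ⟶ A), Cofibrant Cof A → Fibrant Fib A →
        Cof i → IsAcyclicFib Cof Fib q → i ≫ q = 𝟙 A → IsAcyclicCof Cof Fib i),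
      -- (ii) the same restricted to a class F of acyclic fibrations through which every
      -- map from a cofibrant object to a fibrant object factors after a cofibration
      (∃ F : MorphismProperty C,
        (∀ {X Y : C} (q : X ⟶ Y), F q → IsAcyclicFib Cof Fib q) ∧
        (∀ {X Y : C} (f : X ⟶ Y), Cofibrant Cof X → Fibrant Fib Y →
          ∃ (Z : C) (i : X ⟶ Z) (q : Z ⟶ Y), Cof i ∧ F q ∧ i ≫ q = f) ∧
        (∀ {A B : C} (i : A ⟶ B) (q : B ⟶ A), Cofibrant Cof A → Fibrant Fib A →
          Cof i → F q → i ≫ q = 𝟙 A → IsAcyclicCof Cof Fib i)),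
      -- (iii) relative strong cylinders for cofibrations from a cofibrant object
      -- to a fibrant object
      (∀ {A B : C} (i : A ⟶ B), Cof i → Cofibrant Cof A → Fibrant Fib B →
        Nonempty (RelStrongCylinder Cof Fib i)),
      -- (iv) relative strong cylinders for cofibrations between bifibrant objects
      (∀ {A B : C} (i : A ⟶ B), Cof i → Cofibrant Cof A → Fibrant Fib A →
        Cofibrant Cof B → Fibrant Fib B → Nonempty (RelStrongCylinder Cof Fib i))
    ] := by
  tfae_have 1 → 2 := fun h1 => ⟨fun _ _ q => IsAcyclicFib Cof Fib q, fun _ hq => hq, hfac₁, h1⟩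
  tfae_have 2 → 3 := fun ⟨_, _, hFfac, hFret⟩ _ _ _ hi hA hB =>
    nonempty_relStrongCylinder_of_factorization hCof hFfac hFret hi hA hB
  tfae_have 3 → 4 := fun h3 _ _ i hi hA _ _ hB => h3 i hi hA hB
  tfae_have 4 → 1 := by
    intro h4 A B i q hA hAf hi hq hiq
    obtain ⟨cyl⟩ := h4 i hi hA hAf (hCof.cofibrant_of_mem hi hA) (hFib.fibrant_of_mem hq.1 hAf)
    exact cyl.isAcyclicCof_of_retraction hCof hi hA hq hiq
  tfae_finish

/-- equivalent characterizations of the cylinder axiom, in the presence of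
the factorization axiom. -/
theorem statement8 (Cof Fib : MorphismProperty C)
    (hCof : IsCofClass Cof) (hFib : IsFibClass Fib)
    (hfac₁ : ∀ {X Y : C} (f : X ⟶ Y), Cofibrant Cof X → Fibrant Fib Y →
      ∃ (Z : C) (i : X ⟶ Z) (q : Z ⟶ Y), Cof i ∧ IsAcyclicFib Cof Fib q ∧ i ≫ q = f)
    (hfac₂ : ∀ {X Y : C} (f : X ⟶ Y), Cofibrant Cof X → Fibrant Fib Y →
      ∃ (Z : C) (i : X ⟶ Z) (q : Z ⟶ Y), IsAcyclicCof Cof Fib i ∧ Fib q ∧ i ≫ q = f) :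
    List.TFAE [
      -- (i) for any bifibrant `A` and factorization of `𝟙 A` as a cofibration followed
      -- by an acyclic fibration, the cofibration is acyclic
      (∀ {A B : C} (i : A ⟶ B) (q : B ⟶ A), Cofibrant Cof A → Fibrant Fib A →
        Cof i → IsAcyclicFib Cof Fib q → i ≫ q = 𝟙 A → IsAcyclicCof Cof Fib i),
      -- (ii) the same restricted to a class F of acyclic fibrations through which every
      -- map from a cofibrant object to a fibrant object factors after a cofibration
      (∃ F : MorphismProperty C,
        (∀ {X Y : C} (q : X ⟶ Y), F q → IsAcyclicFib Cof Fib q) ∧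
        (∀ {X Y : C} (f : X ⟶ Y), Cofibrant Cof X → Fibrant Fib Y →
          ∃ (Z : C) (i : X ⟶ Z) (q : Z ⟶ Y), Cof i ∧ F q ∧ i ≫ q = f) ∧
        (∀ {A B : C} (i : A ⟶ B) (q : B ⟶ A), Cofibrant Cof A → Fibrant Fib A →
          Cof i → F q → i ≫ q = 𝟙 A → IsAcyclicCof Cof Fib i)),
      -- (iii) relative strong cylinders for cofibrations from a cofibrant object
      -- to a fibrant object
      (∀ {A B : C} (i : A ⟶ B), Cof i → Cofibrant Cof A → Fibrant Fib B →
        Nonempty (RelStrongCylinder Cof Fib i)),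
      -- (iv) relative strong cylinders for cofibrations between bifibrant objects
      (∀ {A B : C} (i : A ⟶ B), Cof i → Cofibrant Cof A → Fibrant Fib A →
        Cofibrant Cof B → Fibrant Fib B → Nonempty (RelStrongCylinder Cof Fib i))
    ] :=
  statement8_general Cof Fib hCof hFib hfac₁

end WMC
end

section
/- In the simplex category Δ, any pair of epimorphisms s : [n] → [i] and t : [n] → [j] admits a pushout; the two structural maps [i] → [k] and [j] → [k] of this pushout are again epimorphisms; and the pushout square is absolute, i.e. its image under every functor from Δ to any category is again a pushout square. -/
open CategoryTheory CategoryTheory.Limits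

universe v' u'

/-
Every epimorphism of `Δ` is an isomorphism or a composite `σ a ≫ s'`, so by pasting it suffices
to push out a codegeneracy along a codegeneracy. For `σ a` along itself the pushout is `𝟙, 𝟙`;
for `a < b` it is the square of the simplicial identity `σ i.castSucc ≫ σ j = σ j.succ ≫ σ i`.
In both cases cofaces `δ` split the maps of the square, and the colimit property follows from
equations between composites alone, which every functor preserves. A strong induction on the
dimension of the common source assembles an arbitrary pair of epimorphisms from such squares.
-/

namespace CategoryTheory

variable {C : Type*} [Category C] {W X Y Z : C}

theorem IsPushout.of_sections {f : W ⟶ X} {g : W ⟶ Y} {inl : X ⟶ Z} {inr : Y ⟶ Z}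
    (w : f ≫ inl = g ≫ inr) (r : Z ⟶ Y) (p : X ⟶ W) (q : Y ⟶ W) (e : Z ⟶ X)
    (hr : r ≫ inr = 𝟙 Z) (hp : p ≫ f = 𝟙 X) (hq : q ≫ g = 𝟙 Y)
    (hpr : inl ≫ r = p ≫ g) (hqe : q ≫ f = inr ≫ e) : IsPushout f g inl inr :=
  IsPushout.of_isColimit <| PushoutCocone.IsColimit.mk w (fun c => r ≫ c.inr)
    (fun c => by rw [reassoc_of% hpr, ← c.condition, reassoc_of% hp])
    (fun c => by
      have hr_inr : r ≫ c.inr = e ≫ c.inl :=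
        calc r ≫ c.inr = r ≫ (q ≫ g) ≫ c.inr := by rw [hq, Category.id_comp]
          _ = r ≫ inr ≫ e ≫ c.inl := by rw [Category.assoc, ← c.condition, reassoc_of% hqe]
          _ = e ≫ c.inl := by rw [reassoc_of% hr]
      rw [hr_inr, ← reassoc_of% hqe, c.condition, reassoc_of% hq])
    (fun c m _ hm => by rw [← hm, reassoc_of% hr])

structure IsAbsolutePushout (f : W ⟶ X) (g : W ⟶ Y) (inl : X ⟶ Z) (inr : Y ⟶ Z) : Prop where
  map : ∀ {D : Type u'} [Category.{v'} D] (F : C ⥤ D),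
    IsPushout (F.map f) (F.map g) (F.map inl) (F.map inr)

namespace IsAbsolutePushout

variable {f : W ⟶ X} {g : W ⟶ Y} {inl : X ⟶ Z} {inr : Y ⟶ Z}

theorem flip (h : IsAbsolutePushout.{v', u'} f g inl inr) :
    IsAbsolutePushout.{v', u'} g f inr inl :=
  ⟨fun F => (h.map F).flip⟩

theorem of_horiz_isIso [IsIso f] [IsIso inr] (w : f ≫ inl = g ≫ inr) :
    IsAbsolutePushout f g inl inr :=
  ⟨fun F => .of_horiz_isIso ⟨by rw [← F.map_comp, w, F.map_comp]⟩⟩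

theorem of_sections (w : f ≫ inl = g ≫ inr) (r : Z ⟶ Y) (p : X ⟶ W) (q : Y ⟶ W) (e : Z ⟶ X)
    (hr : r ≫ inr = 𝟙 Z) (hp : p ≫ f = 𝟙 X) (hq : q ≫ g = 𝟙 Y)
    (hpr : inl ≫ r = p ≫ g) (hqe : q ≫ f = inr ≫ e) : IsAbsolutePushout f g inl inr := by
  refine ⟨fun F => .of_sections ?_ (F.map r) (F.map p) (F.map q) (F.map e) ?_ ?_ ?_ ?_ ?_⟩
  all_goals simp only [← Functor.map_comp, w, hr, hp, hq, hpr, hqe, Functor.map_id]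

end IsAbsolutePushout

def HasAbsoluteEpiPushout {W X Y : C} (s : W ⟶ X) (t : W ⟶ Y) : Prop :=
  ∃ (K : C) (u : X ⟶ K) (v : Y ⟶ K), Epi u ∧ Epi v ∧ IsAbsolutePushout.{v', u'} s t u v

namespace HasAbsoluteEpiPushout

variable {W X Y : C}

theorem symm {s : W ⟶ X} {t : W ⟶ Y} (h : HasAbsoluteEpiPushout.{v', u'} s t) :
    HasAbsoluteEpiPushout.{v', u'} t s :=
  let ⟨K, u, v, hu, hv, hsq⟩ := h
  ⟨K, v, u, hv, hu, hsq.flip⟩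

theorem of_isIso_left (s : W ⟶ X) (t : W ⟶ Y) [IsIso s] [Epi t] :
    HasAbsoluteEpiPushout.{v', u'} s t :=
  ⟨Y, inv s ≫ t, 𝟙 Y, epi_comp _ _, inferInstance, .of_horiz_isIso (by simp)⟩

theorem comp_comp {X₀ Y₀ K₀ : C} {s₀ : W ⟶ X₀} {t₀ : W ⟶ Y₀} {u₀ : X₀ ⟶ K₀} {v₀ : Y₀ ⟶ K₀}
    (h₀ : IsAbsolutePushout.{v', u'} s₀ t₀ u₀ v₀) {s : X₀ ⟶ X} {t : Y₀ ⟶ Y}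
    (hs : HasAbsoluteEpiPushout.{v', u'} s u₀) (ht : HasAbsoluteEpiPushout.{v', u'} v₀ t)
    (hK₀ : ∀ {X' Y' : C} (a : K₀ ⟶ X') (b : K₀ ⟶ Y') [Epi a] [Epi b],
      HasAbsoluteEpiPushout.{v', u'} a b) :
    HasAbsoluteEpiPushout.{v', u'} (s₀ ≫ s) (t₀ ≫ t) := by
  obtain ⟨K₁, u₁, s₁, hu₁, hs₁, h₁⟩ := hs
  obtain ⟨K₂, v₂, t₂, hv₂, ht₂, h₂⟩ := ht
  obtain ⟨K, a, b, ha, hb, h₃⟩ := hK₀ s₁ v₂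
  -- the 2 × 2 grid with `h₀` top left, `h₁` top right, `h₂` bottom left and `h₃` bottom right
  exact ⟨K, u₁ ≫ a, t₂ ≫ b, epi_comp _ _, epi_comp _ _,
    ⟨fun F => by
      simpa only [F.map_comp] using
        ((h₀.map F).paste_horiz (h₁.map F)).paste_vert ((h₂.map F).paste_horiz (h₃.map F))⟩⟩

end HasAbsoluteEpiPushout

end CategoryTheory

namespace SimplexCategory

open Simplicial

theorem isIso_or_exists_eq_σ_comp_of_epi {n : ℕ} {x : SimplexCategory} (s : ⦋n + 1⦌ ⟶ x)
    [Epi s] :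
    IsIso s ∨ ∃ (a : Fin (n + 1)) (s' : ⦋n⦌ ⟶ x), Epi s' ∧ s = σ a ≫ s' := by
  by_cases hs : Function.Injective s.toOrderHom
  · have : Mono s := mono_iff_injective.mpr hs
    exact .inl (isIso_of_mono_of_epi s)
  · obtain ⟨a, s', rfl⟩ := eq_σ_comp_of_not_injective s hs
    exact .inr ⟨a, s', epi_of_epi (σ a) s', rfl⟩

theorem isAbsolutePushout_σ_self {n : ℕ} (a : Fin (n + 1)) :
    IsAbsolutePushout.{v', u'} (σ a) (σ a) (𝟙 ⦋n⦌) (𝟙 ⦋n⦌) :=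
  .of_sections rfl (𝟙 _) (δ a.castSucc) (δ a.castSucc) (𝟙 _) (by simp) δ_comp_σ_self
    δ_comp_σ_self (by simp [δ_comp_σ_self]) (by simp [δ_comp_σ_self])

theorem isAbsolutePushout_σ_castSucc_σ_succ {n : ℕ} {i j : Fin (n + 1)} (h : i ≤ j) :
    IsAbsolutePushout.{v', u'} (σ i.castSucc) (σ j.succ) (σ j) (σ i) :=
  .of_sections (σ_comp_σ h) (δ i.castSucc) (δ i.castSucc.castSucc) (δ j.succ.succ) (δ j.succ)
    δ_comp_σ_self δ_comp_σ_self δ_comp_σ_succ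
    (δ_comp_σ_of_le (Fin.castSucc_le_castSucc_iff.mpr h)).symm
    (δ_comp_σ_of_gt (Fin.castSucc_lt_succ_iff.mpr h))

theorem hasAbsoluteEpiPushout_σ_σ_of_lt {n : ℕ} {a b : Fin (n + 1)} (hab : a < b) :
    HasAbsoluteEpiPushout.{v', u'} (σ a) (σ b) := by
  rcases n with _ | n
  · exact absurd (Fin.subsingleton_one.elim a b) hab.ne
  obtain ⟨i, rfl⟩ := Fin.exists_castSucc_eq.mpr (Fin.ne_last_of_lt hab)
  obtain ⟨j, rfl⟩ := Fin.exists_succ_eq.mpr (Fin.ne_zero_of_lt hab)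
  exact ⟨_, _, _, inferInstance, inferInstance,
    isAbsolutePushout_σ_castSucc_σ_succ (Fin.castSucc_lt_succ_iff.mp hab)⟩

theorem hasAbsoluteEpiPushout_σ_σ {n : ℕ} (a b : Fin (n + 1)) :
    HasAbsoluteEpiPushout.{v', u'} (σ a) (σ b) := by
  rcases lt_trichotomy a b with hab | rfl | hab
  · exact hasAbsoluteEpiPushout_σ_σ_of_lt hab
  · exact ⟨_, _, _, inferInstance, inferInstance, isAbsolutePushout_σ_self a⟩
  · exact (hasAbsoluteEpiPushout_σ_σ_of_lt hab).symm

theorem hasAbsoluteEpiPushout_of_epi {n : ℕ} {x y : SimplexCategory}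
    (s : ⦋n⦌ ⟶ x) (t : ⦋n⦌ ⟶ y) [Epi s] [Epi t] : HasAbsoluteEpiPushout.{v', u'} s t := by
  induction n using Nat.strong_induction_on generalizing x y with | _ n ih => ?_
  rcases n with _ | n
  · have : IsIso s := (isIso_iff_of_epi s).mpr (Nat.le_zero.mp (len_le_of_epi s)).symm
    exact .of_isIso_left s t
  rcases isIso_or_exists_eq_σ_comp_of_epi s with hs | ⟨a, s, hs, rfl⟩
  · exact .of_isIso_left _ t
  rcases isIso_or_exists_eq_σ_comp_of_epi t with ht | ⟨b, t, ht, rfl⟩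
  · exact (HasAbsoluteEpiPushout.of_isIso_left _ _).symm
  obtain ⟨K, u₀, v₀, hu₀, hv₀, h₀⟩ := hasAbsoluteEpiPushout_σ_σ.{v', u'} a b
  obtain ⟨m, rfl⟩ : ∃ m, K = ⦋m⦌ := ⟨K.len, (mk_len K).symm⟩
  have hm : m < n + 1 := Nat.lt_succ_of_le (le_of_epi u₀)
  exact HasAbsoluteEpiPushout.comp_comp h₀ (ih n n.lt_succ_self s u₀)
    (ih n n.lt_succ_self v₀ t) (fun a b _ _ => ih m hm a b)

end SimplexCategory

/-- in the simplex category, any pair of epimorphisms out of a common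
object admits a pushout whose structural maps are again epimorphisms, and this pushout
is absolute: its image under any functor to any category is again a pushout square. -/
theorem statement14 {n i j : ℕ}
    (s : SimplexCategory.mk n ⟶ SimplexCategory.mk i)
    (t : SimplexCategory.mk n ⟶ SimplexCategory.mk j)
    (hs : Epi s) (ht : Epi t) :
    ∃ (k : SimplexCategory) (u : SimplexCategory.mk i ⟶ k) (v : SimplexCategory.mk j ⟶ k),
      Epi u ∧ Epi v ∧
      ∀ {D : Type u'} [Category.{v'} D] (F : SimplexCategory ⥤ D),
        IsPushout (F.map s) (F.map t) (F.map u) (F.map v) := by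
  obtain ⟨k, u, v, hu, hv, hsq⟩ := SimplexCategory.hasAbsoluteEpiPushout_of_epi.{v', u'} s t
  exact ⟨k, u, v, hu, hv, hsq.map⟩
end

section
/- For 0 < i < n, the inner horn inclusion Λ[n, i] → Δ[n] is a retract, in the arrow category of simplicial sets, of the pushout-product (with respect to the cartesian product) of the inner horn inclusion Λ[2, 1] → Δ[2] with Λ[n, i] → Δ[n]. -/
/-!
Joyal's retraction. Let `σ : [n] → [2]` send `j < i`, `j = i`, `j > i` to `0`, `1`, `2`, and
let `r : [2] × [n] → [n]` be `r (0, a) = min a i`, `r (1, a) = i`, `r (2, a) = max a i`. Both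
are monotone and `r (σ a, a) = a`, so `Δ[n] → Δ[2] × Δ[n] → Δ[n]` is a retraction. The map `r`
sends `Λ[2, 1] × Δ[n]` into `Λ[n, i]`, since a simplex of `Λ[2, 1]` misses `0` or `2`, forcing
`r ≥ i > 0` or `r ≤ i < n`; it sends `Δ[2] × Λ[n, i]` into `Λ[n, i]`, since `r (c, a) ∈ {a, i}`.
As `Λ[n, i] → Δ[n]` is mono, these two restrictions assemble into a retraction of arrows.
-/

open CategoryTheory CategoryTheory.Limits Simplicial

namespace SSetStmt

/-- The pushout-product (corner-product) of two morphisms with respect to the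
cartesian product. -/
noncomputable def ppCart {D : Type*} [Category D] [HasBinaryProducts D] [HasPushouts D]
    {A B X Y : D} (f : A ⟶ B) (g : X ⟶ Y) :
    pushout (prod.map (𝟙 A) g) (prod.map f (𝟙 X)) ⟶ B ⨯ Y :=
  pushout.desc (prod.map f (𝟙 Y)) (prod.map (𝟙 B) g) (by
    rw [prod.map_map, prod.map_map, Category.id_comp, Category.id_comp,
      Category.comp_id, Category.comp_id])

/-- `Rlp S`: morphisms with the right lifting property against every member of `S`. -/
def Rlp {D : Type*} [Category D] (S : MorphismProperty D) : MorphismProperty D :=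
  fun _ _ p => ∀ ⦃A B : D⦄ (i : A ⟶ B), S i → HasLiftingProperty i p

/-- `Llp S`: morphisms with the left lifting property against every member of `S`. -/
def Llp {D : Type*} [Category D] (S : MorphismProperty D) : MorphismProperty D :=
  fun _ _ i => ∀ ⦃X Y : D⦄ (p : X ⟶ Y), S p → HasLiftingProperty i p

/-- `f` is a retract of `g` in the arrow category. -/
def ArrowRetract {D : Type*} [Category D] {X Y X' Y' : D} (f : X ⟶ Y) (g : X' ⟶ Y') : Prop :=
  ∃ (u : Arrow.mk f ⟶ Arrow.mk g) (r : Arrow.mk g ⟶ Arrow.mk f), u ≫ r = 𝟙 (Arrow.mk f)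

theorem arrowRetract_ppCart_of_retraction {D : Type*} [Category D] [HasBinaryProducts D]
    [HasPushouts D] {A B X Y : D} (f : A ⟶ B) (g : X ⟶ Y) [Mono g] (σ : Y ⟶ B)
    (ρ : B ⨯ Y ⟶ Y) (hρσ : prod.lift σ (𝟙 Y) ≫ ρ = 𝟙 Y)
    (ρ₁ : A ⨯ Y ⟶ X) (h₁ : ρ₁ ≫ g = prod.map f (𝟙 Y) ≫ ρ)
    (ρ₂ : B ⨯ X ⟶ X) (h₂ : ρ₂ ≫ g = prod.map (𝟙 B) g ≫ ρ) :
    ArrowRetract g (ppCart f g) := by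
  have hcompat : prod.map (𝟙 A) g ≫ ρ₁ = prod.map f (𝟙 X) ≫ ρ₂ := by
    rw [← cancel_mono g, Category.assoc, Category.assoc, h₁, h₂, prod.map_map_assoc,
      prod.map_map_assoc]
    simp
  have hsection : prod.lift (g ≫ σ) (𝟙 X) ≫ ρ₂ = 𝟙 X := by
    rw [← cancel_mono g]
    calc (prod.lift (g ≫ σ) (𝟙 X) ≫ ρ₂) ≫ g
        = (prod.lift (g ≫ σ) (𝟙 X) ≫ prod.map (𝟙 B) g) ≫ ρ := by simp [h₂]
      _ = g ≫ prod.lift σ (𝟙 Y) ≫ ρ := by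
        rw [← Category.assoc]; congr 1; ext <;> simp
      _ = 𝟙 X ≫ g := by simp [hρσ]
  refine ⟨Arrow.homMk' (prod.lift (g ≫ σ) (𝟙 X) ≫ pushout.inr _ _) (prod.lift σ (𝟙 Y)) ?_,
    Arrow.homMk' (pushout.desc ρ₁ ρ₂ hcompat) ρ ?_, ?_⟩
  · rw [ppCart, Category.assoc, pushout.inr_desc]
    apply prod.hom_ext <;> simp
  · apply pushout.hom_ext
    · rw [ppCart, pushout.inl_desc_assoc, pushout.inl_desc_assoc, h₁]
    · rw [ppCart, pushout.inr_desc_assoc, pushout.inr_desc_assoc, h₂]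
  · ext
    · change (_ ≫ pushout.inr _ _) ≫ pushout.desc ρ₁ ρ₂ hcompat = 𝟙 X
      rw [Category.assoc, pushout.inr_desc, hsection]
    · exact hρσ

end SSetStmt

universe u

namespace SSet

lemma mem_horn_iff_exists_forall_ne {n : ℕ} (i : Fin (n + 1)) {m : SimplexCategoryᵒᵖ}
    (x : (Δ[n] : SSet.{u}).obj m) :
    x ∈ (horn n i).obj m ↔ ∃ v ≠ i, ∀ j, stdSimplex.asOrderHom x j ≠ v := by
  simp [mem_horn_iff, Set.ne_univ_iff_exists_notMem, not_or]

namespace stdSimplex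

variable {p q r : ℕ}

lemma asOrderHom_injective {m : SimplexCategoryᵒᵖ} :
    Function.Injective (asOrderHom : (Δ[p] : SSet.{u}).obj m → _) :=
  fun _ _ h => congrArg objMk h

noncomputable def prodHomOfOrderHom (φ : Fin (p + 1) × Fin (q + 1) →o Fin (r + 1)) :
    (Δ[p] : SSet.{u}) ⨯ Δ[q] ⟶ Δ[r] where
  app m := TypeCat.ofHom fun z => objMk (φ.comp
    ((asOrderHom ((prod.fst : (Δ[p] : SSet.{u}) ⨯ Δ[q] ⟶ _).app m z)).prod
      (asOrderHom ((prod.snd : (Δ[p] : SSet.{u}) ⨯ Δ[q] ⟶ _).app m z))))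
  naturality m m' g := by
    ext z
    have h₁ := ConcreteCategory.congr_hom
      ((prod.fst : (Δ[p] : SSet.{u}) ⨯ Δ[q] ⟶ _).naturality g) z
    have h₂ := ConcreteCategory.congr_hom
      ((prod.snd : (Δ[p] : SSet.{u}) ⨯ Δ[q] ⟶ _).naturality g) z
    dsimp at h₁ h₂ ⊢
    rw [h₁, h₂]
    rfl

lemma asOrderHom_comp_prodHomOfOrderHom_app {Z : SSet.{u}} (h : Z ⟶ Δ[p] ⨯ Δ[q])
    (φ : Fin (p + 1) × Fin (q + 1) →o Fin (r + 1)) {m : SimplexCategoryᵒᵖ} (z : Z.obj m)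
    (j : Fin (m.unop.len + 1)) :
    asOrderHom ((h ≫ prodHomOfOrderHom φ).app m z) j =
      φ (asOrderHom ((h ≫ prod.fst).app m z) j, asOrderHom ((h ≫ prod.snd).app m z) j) := rfl

end stdSimplex

end SSet

namespace SSetStmt

open SSet

section

variable {n : ℕ}

def hornSection (i : Fin (n + 1)) : Fin (n + 1) →o Fin 3 where
  toFun j := if j < i then 0 else if j = i then 1 else 2
  monotone' a b hab := by
    dsimp only
    split_ifs <;> grind

lemma hornSection_apply (i j : Fin (n + 1)) :
    hornSection i j = if j < i then 0 else if j = i then 1 else 2 := rfl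

def hornRetraction (i : Fin (n + 1)) : Fin 3 × Fin (n + 1) →o Fin (n + 1) where
  toFun p := ![min p.2 i, i, max p.2 i] p.1
  monotone' := by
    rintro ⟨c, a⟩ ⟨c', a'⟩ ⟨hc : c ≤ c', ha : a ≤ a'⟩
    fin_cases c <;> fin_cases c' <;> simp at hc ⊢ <;> grind

section

variable (i a : Fin (n + 1))

@[simp] lemma hornRetraction_zero : hornRetraction i (0, a) = min a i := rfl
@[simp] lemma hornRetraction_one : hornRetraction i (1, a) = i := rfl
@[simp] lemma hornRetraction_two : hornRetraction i (2, a) = max a i := rfl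

lemma hornRetraction_hornSection : hornRetraction i (hornSection i a, a) = a := by
  rw [hornSection_apply]
  split_ifs <;> simp <;> grind

lemma hornRetraction_le {c : Fin 3} (hc : c ≠ 2) : hornRetraction i (c, a) ≤ i := by
  fin_cases c <;> simp_all

lemma le_hornRetraction {c : Fin 3} (hc : c ≠ 0) : i ≤ hornRetraction i (c, a) := by
  fin_cases c <;> simp_all

lemma hornRetraction_eq_or_eq (c : Fin 3) :
    hornRetraction i (c, a) = a ∨ hornRetraction i (c, a) = i := by
  fin_cases c <;> simp <;> grind

end

lemma prod_lift_map_hornSection_comp_hornRetraction (i : Fin (n + 1)) :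
    prod.lift (SSet.stdSimplex.map (SimplexCategory.mkHom (hornSection i)))
        (𝟙 (Δ[n] : SSet.{u})) ≫
      stdSimplex.prodHomOfOrderHom.{u} (hornRetraction i) = 𝟙 Δ[n] := by
  refine SSet.hom_ext fun m => ConcreteCategory.hom_ext _ _ fun x => ?_
  refine stdSimplex.asOrderHom_injective (OrderHom.ext _ _ (funext fun j => ?_))
  rw [stdSimplex.asOrderHom_comp_prodHomOfOrderHom_app, prod.lift_fst, prod.lift_snd]
  exact hornRetraction_hornSection i _

lemma range_prod_map_horn_ι_comp_hornRetraction_le {i : Fin (n + 1)} (h0 : 0 < (i : ℕ))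
    (hn : (i : ℕ) < n) :
    Subcomplex.range (prod.map (horn.{u} 2 1).ι (𝟙 Δ[n]) ≫
      stdSimplex.prodHomOfOrderHom.{u} (hornRetraction i)) ≤ Λ[n, i] := by
  rintro m _ ⟨z, rfl⟩
  obtain ⟨v, hv1, hv⟩ := (mem_horn_iff_exists_forall_ne _ _).1
    ((prod.fst : (Λ[2, 1] : SSet.{u}) ⨯ Δ[n] ⟶ _).app m z).2
  rw [mem_horn_iff_exists_forall_ne]
  simp_rw [stdSimplex.asOrderHom_comp_prodHomOfOrderHom_app, prod.map_fst, prod.map_snd]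
  obtain rfl | rfl : v = 0 ∨ v = 2 := by fin_cases v <;> simp_all
  · have hi : i ≠ 0 := fun e => by simp [e] at h0
    exact ⟨0, hi.symm, fun j h =>
      hi (Fin.le_zero_iff.mp ((le_hornRetraction i _ (hv j)).trans_eq h))⟩
  · have hi : i ≠ Fin.last n := fun e => by simp [e] at hn
    exact ⟨Fin.last n, hi.symm, fun j h =>
      hi (le_antisymm (Fin.le_last i) (h.symm.trans_le (hornRetraction_le i _ (hv j))))⟩

lemma range_prod_map_id_horn_ι_comp_hornRetraction_le (i : Fin (n + 1)) :
    Subcomplex.range (prod.map (𝟙 Δ[2]) (horn.{u} n i).ι ≫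
      stdSimplex.prodHomOfOrderHom.{u} (hornRetraction i)) ≤ Λ[n, i] := by
  rintro m _ ⟨z, rfl⟩
  obtain ⟨v, hv1, hv⟩ := (mem_horn_iff_exists_forall_ne _ _).1
    ((prod.snd : (Δ[2] : SSet.{u}) ⨯ Λ[n, i] ⟶ _).app m z).2
  rw [mem_horn_iff_exists_forall_ne]
  refine ⟨v, hv1, fun j => ?_⟩
  rw [stdSimplex.asOrderHom_comp_prodHomOfOrderHom_app, prod.map_fst, prod.map_snd]
  rcases hornRetraction_eq_or_eq i _ _ with h | h
  · exact fun e => hv j (h.symm.trans e)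
  · exact fun e => hv1 (e.symm.trans h)

end

/-- for `0 < i < n`, the inner horn inclusion `Λ[n, i] ⟶ Δ[n]` is a
retract, in the arrow category of simplicial sets, of its pushout-product with the inner
horn inclusion `Λ[2, 1] ⟶ Δ[2]`. -/
theorem statement16 (n : ℕ) (i : Fin (n + 1)) (h0 : 0 < (i : ℕ)) (hn : (i : ℕ) < n) :
    ArrowRetract ((SSet.horn n i).ι)
      (ppCart ((SSet.horn 2 1).ι) ((SSet.horn n i).ι)) :=
  arrowRetract_ppCart_of_retraction _ _ _ _ (prod_lift_map_hornSection_comp_hornRetraction i)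
    (Subcomplex.lift _ (range_prod_map_horn_ι_comp_hornRetraction_le h0 hn))
    (Subcomplex.lift_ι _ _)
    (Subcomplex.lift _ (range_prod_map_id_horn_ι_comp_hornRetraction_le i))
    (Subcomplex.lift_ι _ _)

end SSetStmt
end
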